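/- arXiv:1911.08091 — 7 statements merged into one kernel-verified Lean document; each statement's English description precedes it below -/
import Mathlib

section
/- If K₁ and K₂ are compact subsets of ℝⁿ with dim_B(K₁) + dim_B(K₂) < n (upper box dimensions), then the arithmetic difference K₁ − K₂ has empty interior, and consequently the set of translations t ∈ ℝⁿ such that K₁ ∩ (K₂ + t) = ∅ is dense in ℝⁿ. -/
open Pointwise

noncomputable def coverNum {X : Type*} [PseudoMetricSpace X] (S : Set X) (ε : ℝ) : ℕ :=
  sInf {n : ℕ | ∃ t : Finset X, t.card = n ∧ S ⊆ ⋃ x ∈ t, Metric.ball x ε}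

noncomputable def ubDim {X : Type*} [PseudoMetricSpace X] (S : Set X) : ℝ :=
  Filter.limsup (fun ε : ℝ => Real.log (coverNum S ε) / Real.log (1 / ε))
    (nhdsWithin 0 (Set.Ioi 0))

/-!
If `K₁` and `K₂` are covered by `N₁ < ε^(-a)` and `N₂ < ε^(-b)` balls of radius `ε`, with
`a + b < n`, the differences of the centres give `N₁ N₂` balls of radius `2ε` covering `K₁ - K₂`.
A ball of radius `r` inside `K₁ - K₂` needs at least `(r / 2ε)^n` of them by comparing volumes,
which exceeds `ε^(-(a + b))` for small `ε`.

The hypothesis `ubDim K < a` only yields such covers if `log N(ε) / log (1/ε)` is bounded above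
(otherwise the real `limsup` is a junk value); for bounded sets in finite dimension this follows
from the dual volume estimate for maximal `ε`-separated sets.
-/

open Metric Filter Set MeasureTheory Module Topology

section CoverNum

variable {X : Type*} [PseudoMetricSpace X] {S : Set X} {ε : ℝ}

lemma coverNum_le_card {t : Finset X} (h : S ⊆ ⋃ x ∈ t, ball x ε) : coverNum S ε ≤ t.card :=
  Nat.sInf_le ⟨t, rfl, h⟩

lemma exists_finset_card_eq_coverNum (h : ∃ t : Finset X, S ⊆ ⋃ x ∈ t, ball x ε) :
    ∃ t : Finset X, t.card = coverNum S ε ∧ S ⊆ ⋃ x ∈ t, ball x ε :=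
  let ⟨t, ht⟩ := h
  Nat.sInf_mem (s := {n : ℕ | ∃ t : Finset X, t.card = n ∧ S ⊆ ⋃ x ∈ t, ball x ε})
    ⟨t.card, t, rfl, ht⟩

lemma TotallyBounded.exists_finset_cover (hS : TotallyBounded S) (hε : 0 < ε) :
    ∃ t : Finset X, S ⊆ ⋃ x ∈ t, ball x ε := by
  obtain ⟨t, ht, hcover⟩ := totallyBounded_iff.1 hS ε hε
  exact ⟨ht.toFinset, by simpa using hcover⟩

/-- A maximal `ε`-separated subset of `S` is an `ε`-cover of `S`. -/
lemma coverNum_le_of_forall_separated_card_le (hε : 0 < ε) {B : ℝ}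
    (hB : ∀ t : Finset X, ↑t ⊆ S → (t : Set X).Pairwise (fun x y => ε ≤ dist x y) →
      (t.card : ℝ) ≤ B) :
    (coverNum S ε : ℝ) ≤ B := by
  classical
  set P := {k : ℕ | ∃ t : Finset X, ↑t ⊆ S ∧ (t : Set X).Pairwise (fun x y => ε ≤ dist x y) ∧
    t.card = k}
  have hP : BddAbove P := ⟨⌊B⌋₊, fun _ ⟨t, hS, hsep, hk⟩ => hk ▸ Nat.le_floor (hB t hS hsep)⟩
  obtain ⟨t, htS, hsep, hcard⟩ : sSup P ∈ P := Nat.sSup_mem ⟨0, ∅, by simp⟩ hP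
  have hcover : S ⊆ ⋃ x ∈ t, ball x ε := by
    intro y hy
    by_contra hyt
    simp only [mem_iUnion, mem_ball, exists_prop, not_exists, not_and, not_lt] at hyt
    have hyt' : y ∉ t := fun hy' => (hyt y hy').not_gt (by simpa using hε)
    have hins : (insert y t).card ∈ P := by
      refine ⟨insert y t, ?_, ?_, rfl⟩
      · simpa [insert_subset_iff] using ⟨hy, htS⟩
      · rw [Finset.coe_insert]
        exact hsep.insert fun x hx _ => ⟨hyt x hx, dist_comm x y ▸ hyt x hx⟩
    have := le_csSup hP hins
    rw [Finset.card_insert_of_notMem hyt'] at this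
    omega
  exact (Nat.cast_le.2 (coverNum_le_card hcover)).trans (hB t htS hsep)

lemma eventually_coverNum_lt_rpow_of_ubDim_lt
    (hS : IsBoundedUnder (· ≤ ·) (𝓝[>] 0) fun ε => Real.log (coverNum S ε) / Real.log (1 / ε))
    {a : ℝ} (ha : ubDim S < a) : ∀ᶠ ε in 𝓝[>] 0, (coverNum S ε : ℝ) < ε ^ (-a) := by
  filter_upwards [eventually_lt_of_limsup_lt ha hS, Ioo_mem_nhdsGT one_pos]
    with ε hlt ⟨hε0, hε1⟩
  rcases (coverNum S ε).eq_zero_or_pos with h0 | hpos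
  · simpa [h0] using Real.rpow_pos_of_pos hε0 (-a)
  · rw [div_lt_iff₀ (Real.log_pos (one_lt_one_div hε0 hε1)), one_div, Real.log_inv, mul_neg,
      ← neg_mul, ← Real.log_rpow hε0] at hlt
    exact (Real.log_lt_log_iff (by exact_mod_cast hpos) (Real.rpow_pos_of_pos hε0 _)).1 hlt

end CoverNum

lemma coverNum_sub_le {E : Type*} [SeminormedAddCommGroup E] {A B : Set E} {ε δ : ℝ}
    (hA : TotallyBounded A) (hB : TotallyBounded B) (hε : 0 < ε) (hδ : 0 < δ) :
    coverNum (A - B) (ε + δ) ≤ coverNum A ε * coverNum B δ := by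
  classical
  obtain ⟨u, hu_card, hu⟩ := exists_finset_card_eq_coverNum (hA.exists_finset_cover hε)
  obtain ⟨v, hv_card, hv⟩ := exists_finset_card_eq_coverNum (hB.exists_finset_cover hδ)
  rw [← hu_card, ← hv_card, ← Finset.card_product]
  refine (coverNum_le_card (t := (u ×ˢ v).image fun p => p.1 - p.2) ?_).trans
    Finset.card_image_le
  rintro _ ⟨p, hp, q, hq, rfl⟩
  obtain ⟨p₀, hp₀, hpp₀⟩ := mem_iUnion₂.1 (hu hp)
  obtain ⟨q₀, hq₀, hqq₀⟩ := mem_iUnion₂.1 (hv hq)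
  have hcentre : p₀ - q₀ ∈ (u ×ˢ v).image fun p => p.1 - p.2 :=
    Finset.mem_image.2 ⟨(p₀, q₀), Finset.mem_product.2 ⟨hp₀, hq₀⟩, rfl⟩
  exact mem_iUnion₂.2 ⟨p₀ - q₀, hcentre, (dist_sub_sub_le _ _ _ _).trans_lt (add_lt_add hpp₀ hqq₀)⟩

section FiniteDimensional

variable {E : Type*} [NormedAddCommGroup E] [NormedSpace ℝ E] [FiniteDimensional ℝ E]

lemma addHaar_real_ball_of_pos [MeasurableSpace E] [BorelSpace E] (μ : Measure E)
    [μ.IsAddHaarMeasure] (x : E) {r : ℝ} (hr : 0 < r) :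
    μ.real (ball x r) = r ^ finrank ℝ E * μ.real (ball 0 1) := by
  rw [measureReal_def, Measure.addHaar_ball_of_pos μ x hr, ENNReal.toReal_mul,
    ENNReal.toReal_ofReal (by positivity), measureReal_def]

lemma addHaar_real_ball_pos [MeasurableSpace E] [BorelSpace E] (μ : Measure E)
    [μ.IsAddHaarMeasure] (x : E) {r : ℝ} (hr : 0 < r) : 0 < μ.real (ball x r) :=
  ENNReal.toReal_pos (measure_ball_pos μ x hr).ne' measure_ball_lt_top.ne

lemma pow_le_card_mul_pow_of_ball_subset_biUnion {c : E} {r ε : ℝ} (hr : 0 < r) (hε : 0 < ε)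
    {t : Finset E} (h : ball c r ⊆ ⋃ x ∈ t, ball x ε) :
    r ^ finrank ℝ E ≤ t.card * ε ^ finrank ℝ E := by
  borelize E
  set μ : Measure E := Measure.addHaar
  have hvol : μ.real (ball c r) ≤ ∑ x ∈ t, μ.real (ball x ε) :=
    (measureReal_mono h (measure_biUnion_lt_top t.finite_toSet
      fun _ _ => measure_ball_lt_top).ne).trans (measureReal_biUnion_finset_le _ _)
  simp only [addHaar_real_ball_of_pos μ _ hr, addHaar_real_ball_of_pos μ _ hε,
    Finset.sum_const, nsmul_eq_mul, ← mul_assoc] at hvol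
  exact le_of_mul_le_mul_right hvol (addHaar_real_ball_pos μ 0 one_pos)

lemma card_mul_pow_le_of_pairwiseDisjoint {c : E} {r ε : ℝ} (hr : 0 < r) (hε : 0 < ε)
    {t : Finset E} (hdisj : (t : Set E).PairwiseDisjoint (ball · ε))
    (hsub : ∀ x ∈ t, ball x ε ⊆ ball c r) :
    t.card * ε ^ finrank ℝ E ≤ r ^ finrank ℝ E := by
  borelize E
  set μ : Measure E := Measure.addHaar
  have hvol : ∑ x ∈ t, μ.real (ball x ε) ≤ μ.real (ball c r) := by
    rw [← measureReal_biUnion_finset hdisj fun _ _ => measurableSet_ball]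
    exact measureReal_mono (iUnion₂_subset hsub) measure_ball_lt_top.ne
  simp only [addHaar_real_ball_of_pos μ _ hr, addHaar_real_ball_of_pos μ _ hε,
    Finset.sum_const, nsmul_eq_mul, ← mul_assoc] at hvol
  exact le_of_mul_le_mul_right hvol (addHaar_real_ball_pos μ 0 one_pos)

lemma coverNum_le_of_subset_closedBall {S : Set E} {c : E} {R ε : ℝ} (hR : 0 ≤ R)
    (hS : S ⊆ closedBall c R) (hε : 0 < ε) :
    (coverNum S ε : ℝ) ≤ ((2 * R + ε) / ε) ^ finrank ℝ E := by
  refine coverNum_le_of_forall_separated_card_le hε fun t htS hsep => ?_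
  have hpack := card_mul_pow_le_of_pairwiseDisjoint (c := c) (r := R + ε / 2) (by positivity)
    (half_pos hε) (fun x hx y hy hxy => ball_disjoint_ball (by linarith [hsep hx hy hxy]))
    (fun x hx => ball_subset_ball' (by linarith [mem_closedBall.1 (hS (htS hx))]))
  rwa [show (2 * R + ε) / ε = (R + ε / 2) / (ε / 2) by field_simp, div_pow,
    le_div_iff₀ (by positivity)]

lemma le_coverNum_of_ball_subset {S : Set E} (hS : TotallyBounded S) {c : E} {r ε : ℝ}
    (hr : 0 < r) (hε : 0 < ε) (hball : ball c r ⊆ S) :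
    (r / ε) ^ finrank ℝ E ≤ coverNum S ε := by
  obtain ⟨t, ht_card, ht⟩ := exists_finset_card_eq_coverNum (hS.exists_finset_cover hε)
  rw [← ht_card, div_pow, div_le_iff₀ (by positivity)]
  exact pow_le_card_mul_pow_of_ball_subset_biUnion hr hε (hball.trans ht)

lemma Bornology.IsBounded.isBoundedUnder_log_coverNum {K : Set E} (hK : Bornology.IsBounded K) :
    IsBoundedUnder (· ≤ ·) (𝓝[>] 0) fun ε => Real.log (coverNum K ε) / Real.log (1 / ε) := by
  obtain ⟨R, hR⟩ := hK.subset_closedBall 0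
  have hK' : K ⊆ closedBall 0 (max R 1) := hR.trans (closedBall_subset_closedBall (le_max_left _ _))
  have hR1 : 1 ≤ max R 1 := le_max_right _ _
  refine isBoundedUnder_of_eventually_le (a := (2 * finrank ℝ E : ℕ)) ?_
  filter_upwards [Ioo_mem_nhdsGT (by positivity : (0 : ℝ) < 1 / (3 * max R 1))]
    with ε ⟨hε0, hεR⟩
  have hε1 : ε < 1 := hεR.trans_le (by rw [div_le_one (by positivity)]; linarith)
  have hlog : 0 < Real.log (1 / ε) := Real.log_pos (one_lt_one_div hε0 hε1)
  have hbase : (2 * max R 1 + ε) / ε ≤ (1 / ε) ^ 2 := by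
    rw [lt_div_iff₀ (by positivity)] at hεR
    rw [div_le_iff₀ hε0, sq, mul_assoc, one_div_mul_cancel hε0.ne', mul_one,
      le_div_iff₀ hε0]
    nlinarith
  have hN : (coverNum K ε : ℝ) ≤ (1 / ε) ^ (2 * finrank ℝ E) := by
    rw [pow_mul]
    exact (coverNum_le_of_subset_closedBall (by positivity) hK' hε0).trans
      (pow_le_pow_left₀ (by positivity) hbase _)
  rw [div_le_iff₀ hlog, ← Real.log_pow]
  rcases (coverNum K ε).eq_zero_or_pos with h0 | hpos
  · rw [h0, Nat.cast_zero, Real.log_zero]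
    exact Real.log_nonneg (one_le_pow₀ (one_lt_one_div hε0 hε1).le)
  · exact Real.log_le_log (by exact_mod_cast hpos) hN

theorem interior_sub_eq_empty_of_ubDim_add_lt_finrank {K₁ K₂ : Set E} (h₁ : IsCompact K₁)
    (h₂ : IsCompact K₂) (hdim : ubDim K₁ + ubDim K₂ < finrank ℝ E) :
    interior (K₁ - K₂) = ∅ := by
  set d := finrank ℝ E
  by_contra hne
  obtain ⟨c, hc⟩ := nonempty_iff_ne_empty.2 hne
  obtain ⟨r, hr, hball⟩ := isOpen_iff.1 isOpen_interior c hc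
  obtain ⟨a, ha, b, hb, hab⟩ : ∃ a, ubDim K₁ < a ∧ ∃ b, ubDim K₂ < b ∧ a + b < d :=
    ⟨ubDim K₁ + (d - ubDim K₁ - ubDim K₂) / 3, by linarith,
      ubDim K₂ + (d - ubDim K₁ - ubDim K₂) / 3, by linarith, by linarith⟩
  have hsmall : ∀ᶠ ε in 𝓝[>] (0 : ℝ), ε ^ ((d : ℝ) - (a + b)) < (r / 2) ^ d := by
    have hlim : Tendsto (fun ε : ℝ => ε ^ ((d : ℝ) - (a + b))) (𝓝[>] 0) (𝓝 0) := by
      simpa [Real.zero_rpow (sub_pos.2 hab).ne'] using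
        (Real.continuousAt_rpow_const 0 _ (Or.inr (sub_pos.2 hab).le)).tendsto.mono_left
          nhdsWithin_le_nhds
    exact hlim.eventually_lt_const (by positivity)
  obtain ⟨ε, hε : 0 < ε, hN₁, hN₂, hεsmall⟩ := (eventually_mem_nhdsWithin.and
    ((eventually_coverNum_lt_rpow_of_ubDim_lt h₁.isBounded.isBoundedUnder_log_coverNum ha).and
    ((eventually_coverNum_lt_rpow_of_ubDim_lt h₂.isBounded.isBoundedUnder_log_coverNum hb).and
    hsmall))).exists
  have hK : IsCompact (K₁ - K₂) := by simpa [sub_eq_add_neg] using h₁.add h₂.neg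
  have hlower := le_coverNum_of_ball_subset hK.totallyBounded hr (add_pos hε hε)
    (hball.trans interior_subset)
  have hupper := coverNum_sub_le h₁.totallyBounded h₂.totallyBounded hε hε
  refine hεsmall.not_gt ?_
  calc ε ^ ((d : ℝ) - (a + b)) = ε ^ (-a) * ε ^ (-b) * ε ^ d := by
        rw [← Real.rpow_natCast, ← Real.rpow_add hε, ← Real.rpow_add hε]; ring_nf
    _ > coverNum K₁ ε * coverNum K₂ ε * ε ^ d := by gcongr
    _ ≥ coverNum (K₁ - K₂) (ε + ε) * ε ^ d := by gcongr; exact_mod_cast hupper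
    _ ≥ (r / (ε + ε)) ^ d * ε ^ d := by gcongr
    _ = (r / 2) ^ d := by rw [← mul_pow]; congr 1; field_simp; ring

end FiniteDimensional

lemma setOf_inter_image_add_eq_empty_eq_compl_sub {G : Type*} [AddCommGroup G] (A B : Set G) :
    {t : G | A ∩ (fun y => y + t) '' B = ∅} = (A - B)ᶜ := by
  ext t
  simp only [mem_ofPred_eq, mem_compl_iff, ← not_nonempty_iff_eq_empty, not_iff_not]
  exact ⟨fun ⟨p, hp, q, hq, h⟩ => ⟨p, hp, q, hq, by simp [← h]⟩,
    fun ⟨p, hp, q, hq, h⟩ => ⟨p, hp, q, hq, by simp [← h]⟩⟩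

/-- If `K₁, K₂ ⊆ ℝⁿ` are compact with `dim_B K₁ + dim_B K₂ < n`, then the arithmetic
difference `K₁ - K₂` has empty interior, and the set of translations `t` with
`K₁ ∩ (K₂ + t) = ∅` is dense in `ℝⁿ`. -/
theorem stmt1 (n : ℕ) (K₁ K₂ : Set (EuclideanSpace ℝ (Fin n)))
    (h₁ : IsCompact K₁) (h₂ : IsCompact K₂)
    (hdim : ubDim K₁ + ubDim K₂ < n) :
    interior (K₁ - K₂) = ∅ ∧
      Dense {t : EuclideanSpace ℝ (Fin n) | K₁ ∩ ((fun y => y + t) '' K₂) = ∅} := by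
  have hint : interior (K₁ - K₂) = ∅ :=
    interior_sub_eq_empty_of_ubDim_add_lt_finrank h₁ h₂ (by rwa [finrank_euclideanSpace_fin])
  refine ⟨hint, ?_⟩
  rw [setOf_inter_image_add_eq_empty_eq_compl_sub]
  exact interior_eq_empty_iff_dense_compl.1 hint
end

section
/- Let (Kᵢ)_{i∈I} be a finite family of mutually disjoint nonempty compact subsets of ℝᵐ, K = ⋃ᵢ Kᵢ with at least two elements in I, and f a continuous map from an open neighborhood of K to ℝᵐ such that K ⊆ f(Kᵢ) for each i and f restricted to each Kᵢ is uniformly expanding (there is λᵢ > 1 with d(f x, f y) ≥ λᵢ d(x,y) for all x, y ∈ Kᵢ). Then for every sequence s = (iₙ)_{n≥0} ∈ I^ℕ, the set ⋂_{n≥0} f⁻ⁿ(K_{iₙ}) contains exactly one point. -/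
/-- Expanding iterated system: for each symbol sequence `s`, the intersection
`⋂_{n≥0} f⁻ⁿ(K_{s n})` contains exactly one point. -/
theorem stmt2 {m : ℕ} {I : Type*} [Finite I] (hI : 2 ≤ Nat.card I)
    (K : I → Set (EuclideanSpace ℝ (Fin m)))
    (U : Set (EuclideanSpace ℝ (Fin m)))
    (f : EuclideanSpace ℝ (Fin m) → EuclideanSpace ℝ (Fin m))
    (hUopen : IsOpen U) (hKU : (⋃ i, K i) ⊆ U)
    (hcomp : ∀ i, IsCompact (K i)) (hne : ∀ i, (K i).Nonempty)
    (hdisj : Pairwise (Function.onFun Disjoint K))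
    (hcont : ContinuousOn f U)
    (hcover : ∀ i, (⋃ j, K j) ⊆ f '' (K i))
    (hexp : ∀ i, ∃ lam : ℝ, 1 < lam ∧
      ∀ x ∈ K i, ∀ y ∈ K i, lam * dist x y ≤ dist (f x) (f y)) :
    ∀ s : ℕ → I, ∃! p : EuclideanSpace ℝ (Fin m), ∀ n : ℕ, f^[n] p ∈ K (s n) := by
  classical
  have hNE : Nonempty I := by
    rcases (Nat.card_pos_iff.mp (by omega : 0 < Nat.card I)) with ⟨h1, _⟩
    exact h1
  have := Fintype.ofFinite I
  -- choose expansion constants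
  choose lam hlam1 hlamspec using hexp
  set L : ℝ := Finset.univ.inf' Finset.univ_nonempty lam with hL
  have hL1 : 1 < L := by
    rw [hL, Finset.lt_inf'_iff]
    intro i _
    exact hlam1 i
  have hLle : ∀ i, L ≤ lam i := fun i =>
    Finset.inf'_le _ (Finset.mem_univ i)
  -- boundedness of the union
  have hcompU : IsCompact (⋃ i, K i) := isCompact_iUnion hcomp
  obtain ⟨M, hM⟩ := Metric.isBounded_iff.mp hcompU.isBounded
  -- key compactness/nonemptiness of finite-itinerary sets
  have key : ∀ n : ℕ, ∀ s : ℕ → I,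
      IsCompact {p : EuclideanSpace ℝ (Fin m) | ∀ k ≤ n, f^[k] p ∈ K (s k)} ∧
      {p : EuclideanSpace ℝ (Fin m) | ∀ k ≤ n, f^[k] p ∈ K (s k)}.Nonempty := by
    intro n
    induction n with
    | zero =>
      intro s
      have hset : {p : EuclideanSpace ℝ (Fin m) | ∀ k ≤ 0, f^[k] p ∈ K (s k)} = K (s 0) := by
        ext p
        simp [Nat.le_zero]
      rw [hset]
      exact ⟨hcomp _, hne _⟩
    | succ n ih =>
      intro s
      obtain ⟨ihc, ihn⟩ := ih (fun k => s (k + 1))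
      set T := {p : EuclideanSpace ℝ (Fin m) | ∀ k ≤ n, f^[k] p ∈ K (s (k + 1))} with hT
      have hset : {p : EuclideanSpace ℝ (Fin m) | ∀ k ≤ n + 1, f^[k] p ∈ K (s k)}
          = K (s 0) ∩ f ⁻¹' T := by
        ext p
        constructor
        · intro hp
          refine ⟨hp 0 (by omega), ?_⟩
          intro k hk
          have := hp (k + 1) (by omega)
          simpa [Function.iterate_succ_apply] using this
        · rintro ⟨h0, hp⟩ k hk
          cases k with
          | zero => simpa using h0
          | succ j =>
            have := hp j (by omega)
            simpa [Function.iterate_succ_apply] using this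
      constructor
      · rw [hset]
        have hclosed : IsClosed (K (s 0) ∩ f ⁻¹' T) := by
          apply ContinuousOn.preimage_isClosed_of_isClosed
            (hcont.mono (fun x hx => hKU (Set.mem_iUnion.mpr ⟨s 0, hx⟩)))
            (hcomp (s 0)).isClosed ihc.isClosed
        exact (hcomp (s 0)).of_isClosed_subset hclosed Set.inter_subset_left
      · rw [hset]
        obtain ⟨q, hq⟩ := ihn
        have hq1 : q ∈ ⋃ j, K j := Set.mem_iUnion.mpr ⟨s 1, hq 0 (by omega)⟩
        obtain ⟨p, hpK, hpq⟩ := hcover (s 0) hq1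
        exact ⟨p, hpK, by rw [Set.mem_preimage, hpq]; exact hq⟩
  intro s
  -- the nested sequence
  set C : ℕ → Set (EuclideanSpace ℝ (Fin m)) :=
    fun n => {p | ∀ k ≤ n, f^[k] p ∈ K (s k)} with hC
  have hsub : ∀ n, C (n + 1) ⊆ C n := fun n p hp k hk => hp k (by omega)
  have hcompC : ∀ n, IsCompact (C n) := fun n => (key n s).1
  have hneC : ∀ n, (C n).Nonempty := fun n => (key n s).2
  obtain ⟨p, hp⟩ := IsCompact.nonempty_iInter_of_sequence_nonempty_isCompact_isClosed
    C hsub hneC (hcompC 0) (fun n => (hcompC n).isClosed)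
  have hpmem : ∀ n, f^[n] p ∈ K (s n) := by
    intro n
    have := Set.mem_iInter.mp hp n
    exact this n le_rfl
  refine ⟨p, hpmem, ?_⟩
  -- uniqueness
  intro q hq
  have grow : ∀ n : ℕ, L ^ n * dist q p ≤ dist (f^[n] q) (f^[n] p) := by
    intro n
    induction n with
    | zero => simp
    | succ n ih =>
      have hx : f^[n] q ∈ K (s n) := hq n
      have hy : f^[n] p ∈ K (s n) := hpmem n
      have hstep := hlamspec (s n) _ hx _ hy
      have h1 : L * dist (f^[n] q) (f^[n] p) ≤ lam (s n) * dist (f^[n] q) (f^[n] p) :=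
        mul_le_mul_of_nonneg_right (hLle (s n)) dist_nonneg
      calc L ^ (n + 1) * dist q p = L * (L ^ n * dist q p) := by ring
        _ ≤ L * dist (f^[n] q) (f^[n] p) :=
            mul_le_mul_of_nonneg_left ih (by linarith)
        _ ≤ lam (s n) * dist (f^[n] q) (f^[n] p) := h1
        _ ≤ dist (f (f^[n] q)) (f (f^[n] p)) := hstep
        _ = dist (f^[n + 1] q) (f^[n + 1] p) := by
            rw [Function.iterate_succ_apply', Function.iterate_succ_apply']
  have hbound : ∀ n, dist (f^[n] q) (f^[n] p) ≤ M := fun n =>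
    hM (Set.mem_iUnion.mpr ⟨s n, hq n⟩) (Set.mem_iUnion.mpr ⟨s n, hpmem n⟩)
  by_contra hne'
  have hd : 0 < dist q p := dist_pos.mpr hne'
  have htend : Filter.Tendsto (fun n : ℕ => L ^ n * dist q p) Filter.atTop Filter.atTop :=
    (tendsto_pow_atTop_atTop_of_one_lt hL1).atTop_mul_const hd
  obtain ⟨n, hn⟩ := (htend.eventually_gt_atTop M).exists
  have := (grow n).trans (hbound n)
  linarith
end

section
/- In the setting of an expanding iterated system: (Kᵢ)_{i∈I} a finite family (|I| ≥ 2) of mutually disjoint nonempty compact subsets of ℝᵐ, K = ⋃ᵢ Kᵢ, and f continuous on a neighborhood of K with K ⊆ f(Kᵢ) and f uniformly expanding on each Kᵢ. Then the map h : I^ℕ → ℝᵐ sending s = (iₙ) to the unique point of ⋂_{n≥0} f⁻ⁿ(K_{iₙ}) is a homeomorphism onto the maximal forward invariant set Λˢ(K,f) = ⋂_{n≥0} f⁻ⁿ(K), where I^ℕ carries the product topology of the discrete topology on I. In particular Λˢ(K,f) is a Cantor set (compact, totally disconnected, perfect). -/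
open Set Function

namespace Stmt3Aux

variable {X : Type*} [MetricSpace X] {I : Type*}

/-- Cylinder set of depth `n` for code `s`. -/
def cyl (K : I → Set X) (f : X → X) (s : ℕ → I) (n : ℕ) : Set X :=
  {x | ∀ k ≤ n, f^[k] x ∈ K (s k)}

variable {K : I → Set X} {f : X → X}

omit [MetricSpace X] in
lemma cyl_zero (s : ℕ → I) : cyl K f s 0 = K (s 0) := by
  ext x; simp [cyl, Nat.le_zero]

omit [MetricSpace X] in
lemma cyl_succ (s : ℕ → I) (n : ℕ) :
    cyl K f s (n + 1) = K (s 0) ∩ f ⁻¹' cyl K f (fun k => s (k + 1)) n := by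
  ext x
  constructor
  · intro h
    refine ⟨by simpa using h 0 (Nat.zero_le _), fun k hk => ?_⟩
    have := h (k + 1) (Nat.succ_le_succ hk)
    rwa [Function.iterate_succ_apply] at this
  · rintro ⟨h0, h1⟩ k hk
    cases k with
    | zero => simpa using h0
    | succ k =>
      rw [Function.iterate_succ_apply]
      exact h1 k (Nat.le_of_succ_le_succ hk)

omit [MetricSpace X] in
lemma cyl_antitone (s : ℕ → I) {n m : ℕ} (h : n ≤ m) : cyl K f s m ⊆ cyl K f s n :=
  fun x hx k hk => hx k (hk.trans h)

omit [MetricSpace X] in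
lemma cyl_subset (s : ℕ → I) (n : ℕ) : cyl K f s n ⊆ K (s 0) := by
  intro x hx; simpa using hx 0 (Nat.zero_le _)

lemma isCompact_cyl (hcomp : ∀ i, IsCompact (K i)) (hf : ∀ i, ContinuousOn f (K i)) :
    ∀ (n : ℕ) (s : ℕ → I), IsCompact (cyl K f s n) := by
  intro n
  induction n with
  | zero => intro s; rw [cyl_zero]; exact hcomp _
  | succ n ih =>
    intro s
    rw [cyl_succ]
    have hC := ih fun k => s (k + 1)
    have hcl : IsClosed (K (s 0) ∩ f ⁻¹' cyl K f (fun k => s (k + 1)) n) :=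
      (hf (s 0)).preimage_isClosed_of_isClosed (hcomp (s 0)).isClosed hC.isClosed
    exact (hcomp (s 0)).of_isClosed_subset hcl inter_subset_left

omit [MetricSpace X] in
lemma nonempty_cyl (hne : ∀ i, (K i).Nonempty)
    (hcover : ∀ i, (⋃ j, K j) ⊆ f '' K i) :
    ∀ (n : ℕ) (s : ℕ → I), (cyl K f s n).Nonempty := by
  intro n
  induction n with
  | zero => intro s; rw [cyl_zero]; exact hne _
  | succ n ih =>
    intro s
    obtain ⟨y, hy⟩ := ih fun k => s (k + 1)
    have hyK : y ∈ K (s 1) := cyl_subset _ _ hy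
    obtain ⟨x, hx, hfx⟩ := hcover (s 0) (mem_iUnion.2 ⟨s 1, hyK⟩)
    refine ⟨x, ?_⟩
    rw [cyl_succ]
    exact ⟨hx, by rw [mem_preimage, hfx]; exact hy⟩

lemma cyl_expansion {lam : ℝ}
    (hexp : ∀ i, ∀ x ∈ K i, ∀ y ∈ K i, lam * dist x y ≤ dist (f x) (f y))
    (hlam : 0 ≤ lam) :
    ∀ (n : ℕ) (s : ℕ → I), ∀ x ∈ cyl K f s n, ∀ y ∈ cyl K f s n,
      lam ^ n * dist x y ≤ dist (f^[n] x) (f^[n] y) := by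
  intro n
  induction n with
  | zero => intro s x _ y _; simp
  | succ n ih =>
    intro s x hx y hy
    rw [cyl_succ] at hx hy
    obtain ⟨hx0, hx1⟩ := hx
    obtain ⟨hy0, hy1⟩ := hy
    have h1 : lam * dist x y ≤ dist (f x) (f y) := hexp (s 0) x hx0 y hy0
    have h2 := ih (fun k => s (k + 1)) (f x) hx1 (f y) hy1
    calc lam ^ (n + 1) * dist x y = lam ^ n * (lam * dist x y) := by ring
      _ ≤ lam ^ n * dist (f x) (f y) :=
          mul_le_mul_of_nonneg_left h1 (pow_nonneg hlam n)
      _ ≤ dist (f^[n] (f x)) (f^[n] (f y)) := h2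
      _ = dist (f^[n + 1] x) (f^[n + 1] y) := by
          rw [Function.iterate_succ_apply, Function.iterate_succ_apply]

end Stmt3Aux

open Stmt3Aux

/-- The coding map `h : I^ℕ → ℝᵐ` of an expanding iterated system is a homeomorphism
onto the maximal forward invariant set `Λˢ(K,f) = ⋂_{n≥0} f⁻ⁿ(K)`; in particular
`Λˢ(K,f)` is a Cantor set (compact, totally disconnected, without isolated points). -/
theorem stmt3 {m : ℕ} {I : Type*} [Fintype I] [TopologicalSpace I] [DiscreteTopology I]
    (hI : 2 ≤ Fintype.card I)
    (K : I → Set (EuclideanSpace ℝ (Fin m)))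
    (U : Set (EuclideanSpace ℝ (Fin m)))
    (f : EuclideanSpace ℝ (Fin m) → EuclideanSpace ℝ (Fin m))
    (hUopen : IsOpen U) (hKU : (⋃ i, K i) ⊆ U)
    (hcomp : ∀ i, IsCompact (K i)) (hne : ∀ i, (K i).Nonempty)
    (hdisj : Pairwise (Function.onFun Disjoint K))
    (hcont : ContinuousOn f U)
    (hcover : ∀ i, (⋃ j, K j) ⊆ f '' (K i))
    (hexp : ∀ i, ∃ lam : ℝ, 1 < lam ∧
      ∀ x ∈ K i, ∀ y ∈ K i, lam * dist x y ≤ dist (f x) (f y)) :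
    (∃ h : (ℕ → I) ≃ₜ {x : EuclideanSpace ℝ (Fin m) // ∀ n : ℕ, f^[n] x ∈ ⋃ i, K i},
      ∀ s : ℕ → I, ∀ n : ℕ, f^[n] (h s : EuclideanSpace ℝ (Fin m)) ∈ K (s n)) ∧
    IsCompact {x : EuclideanSpace ℝ (Fin m) | ∀ n : ℕ, f^[n] x ∈ ⋃ i, K i} ∧
    IsTotallyDisconnected {x : EuclideanSpace ℝ (Fin m) | ∀ n : ℕ, f^[n] x ∈ ⋃ i, K i} ∧
    Perfect {x : EuclideanSpace ℝ (Fin m) | ∀ n : ℕ, f^[n] x ∈ ⋃ i, K i} := by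
  classical
  haveI : Nonempty I := Fintype.card_pos_iff.mp (by omega)
  have hKi_sub : ∀ i, K i ⊆ U := fun i => (Set.subset_iUnion K i).trans hKU
  have hfK : ∀ i, ContinuousOn f (K i) := fun i => hcont.mono (hKi_sub i)
  -- a uniform expansion constant
  choose lam hlam1 hlamexp using hexp
  set lm : ℝ := Finset.univ.inf' Finset.univ_nonempty lam with hlmdef
  have hlm1 : 1 < lm := by
    rw [Finset.lt_inf'_iff]; exact fun i _ => hlam1 i
  have hlm0 : (0:ℝ) ≤ lm := by linarith
  have hlmexp : ∀ i, ∀ x ∈ K i, ∀ y ∈ K i, lm * dist x y ≤ dist (f x) (f y) := by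
    intro i x hx y hy
    refine le_trans ?_ (hlamexp i x hx y hy)
    exact mul_le_mul_of_nonneg_right (Finset.inf'_le _ (Finset.mem_univ i)) dist_nonneg
  -- a bound on the diameter of K
  have hKc : IsCompact (⋃ i, K i) := isCompact_iUnion hcomp
  obtain ⟨D, hD⟩ := Metric.isBounded_iff.mp hKc.isBounded
  have hD0 : 0 ≤ D := by
    obtain ⟨a, ha⟩ := hne (Classical.arbitrary I)
    have := hD (mem_iUnion.2 ⟨_, ha⟩) (mem_iUnion.2 ⟨_, ha⟩)
    simpa using this
  -- cylinders shrink geometrically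
  have hdiam : ∀ (n : ℕ) (s : ℕ → I), ∀ x ∈ cyl K f s n, ∀ y ∈ cyl K f s n,
      dist x y ≤ D / lm ^ n := by
    intro n s x hx y hy
    have h1 := cyl_expansion hlmexp hlm0 n s x hx y hy
    have h2 : dist (f^[n] x) (f^[n] y) ≤ D :=
      hD (mem_iUnion.2 ⟨s n, hx n le_rfl⟩) (mem_iUnion.2 ⟨s n, hy n le_rfl⟩)
    have hp : (0:ℝ) < lm ^ n := pow_pos (by linarith) n
    rw [le_div_iff₀ hp]
    calc dist x y * lm ^ n = lm ^ n * dist x y := mul_comm _ _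
      _ ≤ D := h1.trans h2
  have hsmall : ∀ ε : ℝ, 0 < ε → ∃ n : ℕ, D / lm ^ n < ε := by
    intro ε hε
    have hinv : (0:ℝ) ≤ lm⁻¹ := inv_nonneg.mpr hlm0
    have hinv1 : lm⁻¹ < 1 := inv_lt_one_of_one_lt₀ hlm1
    have h1 : Filter.Tendsto (fun n : ℕ => D / lm ^ n) Filter.atTop (nhds 0) := by
      have h0 := tendsto_pow_atTop_nhds_zero_of_lt_one hinv hinv1
      have := h0.const_mul D
      simp only [mul_zero] at this
      refine this.congr fun n => ?_
      rw [div_eq_mul_inv, inv_pow]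
    exact (h1.eventually (gt_mem_nhds hε)).exists
  -- the coding point
  have hcylc := isCompact_cyl hcomp hfK (K := K)
  have hcyln := nonempty_cyl hne hcover (K := K)
  have hint : ∀ s : ℕ → I, (⋂ n, cyl K f s n).Nonempty := fun s =>
    IsCompact.nonempty_iInter_of_sequence_nonempty_isCompact_isClosed _
      (fun n => cyl_antitone s (Nat.le_succ n)) (fun n => hcyln n s)
      (hcylc 0 s) (fun n => (hcylc n s).isClosed)
  choose hfun hhfun using hint
  have hmem : ∀ (s : ℕ → I) (n : ℕ), hfun s ∈ cyl K f s n := fun s n =>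
    mem_iInter.mp (hhfun s) n
  have hcode : ∀ (s : ℕ → I) (n : ℕ), f^[n] (hfun s) ∈ K (s n) := fun s n =>
    hmem s n n le_rfl
  have hmemΛ : ∀ (s : ℕ → I) (n : ℕ), f^[n] (hfun s) ∈ ⋃ i, K i := fun s n =>
    mem_iUnion.2 ⟨s n, hcode s n⟩
  have huniq : ∀ (s : ℕ → I) (x : EuclideanSpace ℝ (Fin m)),
      (∀ n, x ∈ cyl K f s n) → x = hfun s := by
    intro s x hx
    by_contra hxe
    have hd : 0 < dist x (hfun s) := dist_pos.mpr hxe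
    obtain ⟨n, hn⟩ := hsmall _ hd
    exact absurd (hdiam n s x (hx n) _ (hmem s n)) (not_le.mpr hn)
  -- injectivity
  have hinj : Function.Injective hfun := by
    intro s s' he
    by_contra hss
    obtain ⟨n, hn⟩ : ∃ n, s n ≠ s' n := by
      by_contra hc; push_neg at hc; exact hss (funext hc)
    have h2 := hcode s' n
    rw [← he] at h2
    exact Set.disjoint_left.mp (hdisj hn) (hcode s n) h2
  -- surjectivity onto Λ
  have hsurj : ∀ x : EuclideanSpace ℝ (Fin m),
      (∀ n : ℕ, f^[n] x ∈ ⋃ i, K i) → ∃ s, hfun s = x := by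
    intro x hx
    choose s hs using fun n => mem_iUnion.mp (hx n)
    exact ⟨s, (huniq s x fun n k _ => hs k).symm⟩
  -- continuity
  have hconth : Continuous hfun := by
    rw [continuous_iff_continuousAt]
    intro s
    rw [ContinuousAt, Metric.tendsto_nhds]
    intro ε hε
    obtain ⟨n, hn⟩ := hsmall ε hε
    have hopen : {s' : ℕ → I | ∀ k ≤ n, s' k = s k} ∈ nhds s := by
      have heq : {s' : ℕ → I | ∀ k ≤ n, s' k = s k}
          = ⋂ k ∈ Finset.range (n + 1), {s' : ℕ → I | s' k = s k} := by
        ext s'; simp [Nat.lt_succ_iff]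
      rw [heq]
      refine (isOpen_biInter_finset fun k _ => ?_).mem_nhds (by simp)
      have : IsOpen ((fun s' : ℕ → I => s' k) ⁻¹' {s k}) :=
        (continuous_apply k).isOpen_preimage _ (isOpen_discrete _)
      exact this
    filter_upwards [hopen] with s' hs'
    have h1 : hfun s' ∈ cyl K f s n := fun k hk => by
      rw [← hs' k hk]; exact hmem s' n k hk
    exact lt_of_le_of_lt (hdiam n s _ h1 _ (hmem s n)) hn
  -- the homeomorphism
  let H : (ℕ → I) → {x : EuclideanSpace ℝ (Fin m) // ∀ n : ℕ, f^[n] x ∈ ⋃ i, K i} :=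
    fun s => ⟨hfun s, hmemΛ s⟩
  have hHbij : Function.Bijective H := by
    constructor
    · intro s s' hss
      exact hinj (congrArg Subtype.val hss)
    · rintro ⟨x, hx⟩
      obtain ⟨s, hs⟩ := hsurj x hx
      exact ⟨s, Subtype.ext hs⟩
  have hHcont : Continuous H := hconth.subtype_mk _
  let e : (ℕ → I) ≃ {x : EuclideanSpace ℝ (Fin m) // ∀ n : ℕ, f^[n] x ∈ ⋃ i, K i} :=
    Equiv.ofBijective H hHbij
  have hecont : Continuous e := hHcont
  let h := hecont.homeoOfEquivCompactToT2
  refine ⟨⟨h, fun s n => hcode s n⟩, ?_, ?_, ?_⟩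
  · -- compactness
    have hr : {x : EuclideanSpace ℝ (Fin m) | ∀ n : ℕ, f^[n] x ∈ ⋃ i, K i}
        = Set.range hfun := by
      ext x
      constructor
      · intro hx
        obtain ⟨s, hs⟩ := hsurj x hx
        exact ⟨s, hs⟩
      · rintro ⟨s, rfl⟩
        exact hmemΛ s
    rw [hr]
    exact isCompact_range hconth
  · -- totally disconnected
    rw [← totallyDisconnectedSpace_subtype_iff]
    have he : Topology.IsEmbedding h.symm := h.symm.isEmbedding
    have := he.isTotallyDisconnected_range.mp ?_
    · exact this
    · rw [h.symm.surjective.range_eq]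
      exact isTotallyDisconnected_of_totallyDisconnectedSpace _
  · -- perfect
    constructor
    · have hr : {x : EuclideanSpace ℝ (Fin m) | ∀ n : ℕ, f^[n] x ∈ ⋃ i, K i}
          = Set.range hfun := by
        ext x
        exact ⟨fun hx => hsurj x hx, by rintro ⟨s, rfl⟩; exact hmemΛ s⟩
      rw [hr]
      exact (isCompact_range hconth).isClosed
    · intro x hx
      rw [accPt_iff_nhds]
      intro V hV
      obtain ⟨s, rfl⟩ := hsurj x hx
      obtain ⟨ε, hε, hball⟩ := Metric.mem_nhds_iff.mp hV
      obtain ⟨n, hn⟩ := hsmall ε hε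
      obtain ⟨j, hj⟩ := Fintype.exists_ne_of_one_lt_card (by omega) (s (n + 1))
      set s' := Function.update s (n + 1) j with hs'def
      have hagree : ∀ k ≤ n, s' k = s k := fun k hk =>
        Function.update_of_ne (by omega) _ _
      have h1 : hfun s' ∈ cyl K f s n := fun k hk => by
        rw [← hagree k hk]; exact hmem s' n k hk
      refine ⟨hfun s', ⟨hball ?_, hmemΛ s'⟩, ?_⟩
      · exact Metric.mem_ball.mpr (lt_of_le_of_lt (hdiam n s _ h1 _ (hmem s n)) hn)
      · intro he
        have hA := hcode s' (n + 1)
        rw [he] at hA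
        have hA' : f^[n + 1] (hfun s) ∈ K j := by
          rwa [show s' (n + 1) = j from Function.update_self _ _ _] at hA
        exact Set.disjoint_left.mp (hdisj hj) hA' (hcode s (n + 1))
end

section
/- Let I be a finite set, μ > 2, and (p⁺ᵢ)_{i∈I} points in ℝᵐ such that the balls B(p⁺ᵢ, 2/μ) (in the sup norm) are mutually disjoint. Let f⁺ : ℝᵐ → ℝᵐ be a map with f⁺(y) = μ(y − p⁺ᵢ) on B(p⁺ᵢ, 2/μ), and K⁺ = ⋃ᵢ B(p⁺ᵢ, 2/μ). Then for every N ≥ 1 the set ⋂_{n=0}^{N−1} (f⁺)⁻ⁿ(K⁺) is a disjoint union of (#I)ᴺ closed balls of radius 2/μᴺ, and the upper box dimension of the maximal forward invariant set Λˢ(K⁺, f⁺) = ⋂_{n≥0}(f⁺)⁻ⁿ(K⁺) equals log(#I)/log(μ). -/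
/-!
On `B(pᵢ, 2/μ)` the map `f⁺` is inverted by the contraction `y ↦ pᵢ + μ⁻¹ y`, which maps
`B(0, 2)` onto `B(pᵢ, 2/μ) ⊆ B(0, 2)`. Hence the points whose first `N` iterates stay in `K⁺`
are the images of `B(0, 2)` under the `(#I)^N` compositions of `N` such contractions: balls of
radius `2/μ^N`, pairwise disjoint because the first-level balls are. At scale `ε ≈ μ^(-N)` these
balls cover `Λ`, while the images of a fixed point of one branch are `(#I)^N` points of `Λ` that
are `2ε`-separated; so the covering number is `(#I)^N` up to a bounded shift of `N`, and the box
dimension is `log #I / log μ`.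
-/

open Metric Set Filter Function Real
open scoped Topology

section CoveringNumber

variable {X ι : Type*} [PseudoMetricSpace X] [Fintype ι] {S : Set X} {r ε : ℝ}

lemma exists_finset_ball_cover_of_subset_iUnion_closedBall (c : ι → X)
    (hS : S ⊆ ⋃ j, closedBall (c j) r) (hr : r < ε) :
    ∃ t : Finset X, t.card ≤ Fintype.card ι ∧ S ⊆ ⋃ x ∈ t, ball x ε := by
  classical
  refine ⟨Finset.univ.image c, Finset.card_image_le, fun x hx => ?_⟩
  obtain ⟨j, hj⟩ := mem_iUnion.mp (hS hx)
  exact mem_iUnion₂.mpr ⟨c j, Finset.mem_image_of_mem c (Finset.mem_univ j),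
    (mem_closedBall.mp hj).trans_lt hr⟩

lemma coverNum_le_card_of_subset_iUnion_closedBall (c : ι → X)
    (hS : S ⊆ ⋃ j, closedBall (c j) r) (hr : r < ε) : coverNum S ε ≤ Fintype.card ι := by
  obtain ⟨t, ht, hcov⟩ := exists_finset_ball_cover_of_subset_iUnion_closedBall c hS hr
  refine le_trans (Nat.sInf_le ?_) ht
  exact ⟨t, rfl, hcov⟩

lemma card_le_coverNum_of_separated (x : ι → X) (hxS : ∀ j, x j ∈ S)
    (hsep : Pairwise fun j j' => 2 * ε ≤ dist (x j) (x j'))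
    (hcov : ∃ t : Finset X, S ⊆ ⋃ y ∈ t, ball y ε) : Fintype.card ι ≤ coverNum S ε := by
  obtain ⟨t, hcard, hS⟩ : ∃ t : Finset X, t.card = coverNum S ε ∧ S ⊆ ⋃ y ∈ t, ball y ε := by
    obtain ⟨t, ht⟩ := hcov
    exact Nat.sInf_mem (s := {n | ∃ t : Finset X, t.card = n ∧ S ⊆ ⋃ x ∈ t, ball x ε})
      ⟨t.card, t, rfl, ht⟩
  have hnear : ∀ j, ∃ y ∈ t, dist (x j) y < ε := fun j => by simpa using hS (hxS j)
  choose y hyt hy using hnear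
  have hinj : Injective y := by
    intro j j' h
    by_contra hne
    have h' := hy j'
    rw [← h] at h'
    linarith [hsep hne, hy j, dist_triangle_right (x j) (x j') (y j)]
  rw [← hcard]
  exact Finset.card_le_card_of_injOn y (fun j _ => hyt j) hinj.injOn

end CoveringNumber

section BoxDimension

lemma tendsto_log_one_div_nhdsGT_zero : Tendsto (fun ε : ℝ => log (1 / ε)) (𝓝[>] 0) atTop := by
  simpa [Function.comp_def, one_div, log_inv] using
    tendsto_neg_atBot_atTop.comp tendsto_log_nhdsGT_zero

lemma tendsto_div_log_one_div_of_sandwich {g : ℝ → ℝ} {D C₁ C₂ : ℝ}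
    (h₁ : ∀ᶠ ε in 𝓝[>] 0, D * log (1 / ε) + C₁ ≤ g ε)
    (h₂ : ∀ᶠ ε in 𝓝[>] 0, g ε ≤ D * log (1 / ε) + C₂) :
    Tendsto (fun ε => g ε / log (1 / ε)) (𝓝[>] 0) (𝓝 D) := by
  have hL := tendsto_log_one_div_nhdsGT_zero
  have hpos : ∀ᶠ ε in 𝓝[>] (0 : ℝ), 0 < log (1 / ε) := hL.eventually_gt_atTop 0
  have hlim (C : ℝ) :
      Tendsto (fun ε => (D * log (1 / ε) + C) / log (1 / ε)) (𝓝[>] 0) (𝓝 D) := by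
    have h : Tendsto (fun ε => D + C * (log (1 / ε))⁻¹) (𝓝[>] 0) (𝓝 (D + C * 0)) :=
      tendsto_const_nhds.add ((tendsto_inv_atTop_zero.comp hL).const_mul C)
    rw [mul_zero, add_zero] at h
    refine h.congr' (hpos.mono fun ε hε => ?_)
    field_simp
  refine tendsto_of_tendsto_of_tendsto_of_le_of_le' (hlim C₁) (hlim C₂) ?_ ?_
  · filter_upwards [h₁, hpos] with ε h hε using div_le_div_of_nonneg_right h hε.le
  · filter_upwards [h₂, hpos] with ε h hε using div_le_div_of_nonneg_right h hε.le

variable {F : ℝ → ℕ} {k : ℕ} {μ a b : ℝ}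

lemma le_log_of_pow_le (hk : 1 ≤ k) (hμ : 1 < μ)
    (hlower : ∀ (n : ℕ) ε, 0 < ε → ε ≤ a / μ ^ n → k ^ n ≤ F ε)
    {ε : ℝ} (hε : 0 < ε) (hεa : ε ≤ a) :
    log k / log μ * log (1 / ε) + (log a / log μ - 1) * log k ≤ log (F ε) := by
  obtain ⟨n, hn, hn'⟩ := exists_nat_pow_near ((one_le_div hε).mpr hεa) hμ
  have ha : 0 < a := hε.trans_le hεa
  have hlogμ : 0 < log μ := log_pos hμ
  have hcount : (k : ℝ) ^ n ≤ F ε := by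
    have hεn : ε ≤ a / μ ^ n := by
      rw [le_div_iff₀ (by positivity)]
      rwa [le_div_iff₀ hε, mul_comm] at hn
    exact_mod_cast hlower n ε hε hεn
  have hsplit : log (a / ε) = log a + log (1 / ε) := by
    rw [div_eq_mul_one_div a ε, log_mul ha.ne' (by positivity)]
  have hexp : log (a / ε) < (n + 1) * log μ := by
    rw [← Nat.cast_succ, ← log_pow]
    exact log_lt_log (by positivity) hn'
  calc log k / log μ * log (1 / ε) + (log a / log μ - 1) * log k
      = (log (a / ε) / log μ - 1) * log k := by rw [hsplit]; ring
    _ ≤ n * log k := by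
        refine mul_le_mul_of_nonneg_right ?_ (log_natCast_nonneg k)
        rw [sub_le_iff_le_add, div_le_iff₀ hlogμ]
        linarith
    _ = log ((k : ℝ) ^ n) := by rw [log_pow]
    _ ≤ log (F ε) := log_le_log (by positivity) hcount

lemma log_le_of_le_pow (hμ : 1 < μ)
    (hupper : ∀ (n : ℕ) ε, b / μ ^ n < ε → F ε ≤ k ^ n)
    {ε : ℝ} (hε : 0 < ε) (hεb : ε ≤ b) :
    log (F ε) ≤ log k / log μ * log (1 / ε) + (log b / log μ + 1) * log k := by
  obtain ⟨n, hn, hn'⟩ := exists_nat_pow_near ((one_le_div hε).mpr hεb) hμ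
  have hb : 0 < b := hε.trans_le hεb
  have hlogμ : 0 < log μ := log_pos hμ
  have hcount : F ε ≤ k ^ (n + 1) := by
    refine hupper (n + 1) ε ?_
    rw [div_lt_iff₀ (by positivity)]
    rwa [div_lt_iff₀ hε, mul_comm] at hn'
  have hlogF : log (F ε) ≤ (n + 1) * log k := by
    rcases (F ε).eq_zero_or_pos with h0 | h0
    · rw [h0, Nat.cast_zero, log_zero]
      exact mul_nonneg (by positivity) (log_natCast_nonneg k)
    · rw [← Nat.cast_succ, ← log_pow]
      exact log_le_log (by exact_mod_cast h0) (by exact_mod_cast hcount)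
  have hsplit : log (b / ε) = log b + log (1 / ε) := by
    rw [div_eq_mul_one_div b ε, log_mul hb.ne' (by positivity)]
  have hexp : n * log μ ≤ log (b / ε) := by
    rw [← log_pow]
    exact log_le_log (by positivity) hn
  calc log (F ε) ≤ (n + 1) * log k := hlogF
    _ ≤ (log (b / ε) / log μ + 1) * log k := by
        refine mul_le_mul_of_nonneg_right ?_ (log_natCast_nonneg k)
        rw [add_le_add_iff_right, le_div_iff₀ hlogμ]
        exact hexp
    _ = log k / log μ * log (1 / ε) + (log b / log μ + 1) * log k := by rw [hsplit]; ring

lemma tendsto_log_div_log_one_div_of_pow_bounds (hk : 1 ≤ k) (hμ : 1 < μ) (ha : 0 < a)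
    (hb : 0 < b) (hlower : ∀ (n : ℕ) ε, 0 < ε → ε ≤ a / μ ^ n → k ^ n ≤ F ε)
    (hupper : ∀ (n : ℕ) ε, b / μ ^ n < ε → F ε ≤ k ^ n) :
    Tendsto (fun ε => log (F ε) / log (1 / ε)) (𝓝[>] 0) (𝓝 (log k / log μ)) :=
  tendsto_div_log_one_div_of_sandwich
    (mem_of_superset (Ioc_mem_nhdsGT ha) fun _ hε => le_log_of_pow_le hk hμ hlower hε.1 hε.2)
    (mem_of_superset (Ioc_mem_nhdsGT hb) fun _ hε => log_le_of_le_pow hμ hupper hε.1 hε.2)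

end BoxDimension

section MaximalInvariantSet

variable {α : Type*} {f : α → α} {K : Set α}

/-- `Λˢ(K, f) = ⋂ₙ f⁻ⁿ(K)`. -/
def maximalInvariantSet (f : α → α) (K : Set α) : Set α := {x | ∀ n : ℕ, f^[n] x ∈ K}

lemma maximalInvariantSet_subset : maximalInvariantSet f K ⊆ K := fun _ hx => hx 0

end MaximalInvariantSet

lemma closedBall_subset_closedBall_zero_of_norm_lt {E : Type*} [SeminormedAddCommGroup E]
    {μ R : ℝ} (hμ : 2 ≤ μ) {q : E} (hq : ‖q‖ < R / 2) :
    closedBall q (R / μ) ⊆ closedBall 0 R := by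
  have hR : 0 ≤ R := by linarith [norm_nonneg q]
  refine closedBall_subset_closedBall' ?_
  rw [dist_zero_right]
  have : R / μ ≤ R / 2 := div_le_div_of_nonneg_left hR two_pos hμ
  linarith

section AffineExpandingMap

variable {E I : Type*} [NormedAddCommGroup E] [NormedSpace ℝ E] {μ R : ℝ} {p : I → E}

/-- The inverse of the branch `x ↦ μ • (x - q)`. -/
noncomputable def invBranch (μ : ℝ) (q y : E) : E := q + μ⁻¹ • y

noncomputable def wordMap (μ : ℝ) (p : I → E) : (N : ℕ) → (Fin N → I) → E → E
  | 0, _ => id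
  | N + 1, s => invBranch μ (p (s 0)) ∘ wordMap μ p N (Fin.tail s)

def cylinder (μ R : ℝ) (p : I → E) (N : ℕ) (s : Fin N → I) : Set E :=
  closedBall (wordMap μ p N s 0) (R / μ ^ N)

lemma dist_invBranch (hμ : 0 < μ) (q x y : E) :
    dist (invBranch μ q x) (invBranch μ q y) = dist x y / μ := by
  rw [invBranch, invBranch, dist_add_left, dist_smul₀, norm_inv, Real.norm_of_nonneg hμ.le,
    inv_mul_eq_div]

lemma invBranch_injective (hμ : 0 < μ) (q : E) : Injective (invBranch μ q) :=
  (add_right_injective q).comp (smul_right_injective E (inv_ne_zero hμ.ne'))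

lemma invBranch_smul_sub (hμ : μ ≠ 0) (q x : E) : invBranch μ q (μ • (x - q)) = x := by
  simp [invBranch, smul_smul, hμ]

lemma smul_sub_invBranch (hμ : μ ≠ 0) (q y : E) : μ • (invBranch μ q y - q) = y := by
  simp [invBranch, smul_smul, hμ]

lemma image_invBranch_closedBall (hμ : 0 < μ) (q c : E) (r : ℝ) :
    invBranch μ q '' closedBall c r = closedBall (invBranch μ q c) (r / μ) := by
  ext x
  constructor
  · rintro ⟨y, hy, rfl⟩
    rw [mem_closedBall, dist_invBranch hμ]
    exact div_le_div_of_nonneg_right hy hμ.le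
  · intro hx
    refine ⟨μ • (x - q), ?_, invBranch_smul_sub hμ.ne' q x⟩
    rw [mem_closedBall, ← invBranch_smul_sub hμ.ne' q x, dist_invBranch hμ] at hx
    exact (div_le_div_iff_of_pos_right hμ).mp hx

lemma image_invBranch_closedBall_zero (hμ : 0 < μ) (q : E) (r : ℝ) :
    invBranch μ q '' closedBall 0 r = closedBall q (r / μ) := by
  rw [image_invBranch_closedBall hμ, invBranch, smul_zero, add_zero]

lemma image_wordMap_closedBall (hμ : 0 < μ) (N : ℕ) (s : Fin N → I) (c : E) (r : ℝ) :
    wordMap μ p N s '' closedBall c r = closedBall (wordMap μ p N s c) (r / μ ^ N) := by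
  induction N generalizing r with
  | zero => simp [wordMap]
  | succ N ih =>
    rw [wordMap, image_comp, ih, image_invBranch_closedBall hμ, div_div, ← pow_succ]
    rfl

lemma cylinder_eq_image (hμ : 0 < μ) (N : ℕ) (s : Fin N → I) :
    cylinder μ R p N s = wordMap μ p N s '' closedBall 0 R :=
  (image_wordMap_closedBall hμ N s 0 R).symm

lemma cylinder_succ (hμ : 0 < μ) (N : ℕ) (s : Fin (N + 1) → I) :
    cylinder μ R p (N + 1) s = invBranch μ (p (s 0)) '' cylinder μ R p N (Fin.tail s) := by
  rw [cylinder_eq_image hμ, cylinder_eq_image hμ, wordMap, image_comp]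

lemma mapsTo_wordMap {S : Set E} (h : ∀ i, MapsTo (invBranch μ (p i)) S S) (N : ℕ)
    (s : Fin N → I) : MapsTo (wordMap μ p N s) S S := by
  induction N with
  | zero => exact mapsTo_id S
  | succ N ih => exact (h _).comp (ih _)

lemma cylinder_subset_closedBall_zero (hμ : 0 < μ)
    (hK : ∀ i, closedBall (p i) (R / μ) ⊆ closedBall 0 R) (N : ℕ) (s : Fin N → I) :
    cylinder μ R p N s ⊆ closedBall 0 R := by
  rw [cylinder_eq_image hμ]
  refine (mapsTo_wordMap (fun i => ?_) N s).image_subset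
  rw [mapsTo_iff_image_subset, image_invBranch_closedBall_zero hμ]
  exact hK i

lemma cylinder_succ_subset (hμ : 0 < μ)
    (hK : ∀ i, closedBall (p i) (R / μ) ⊆ closedBall 0 R) (N : ℕ) (s : Fin (N + 1) → I) :
    cylinder μ R p (N + 1) s ⊆ closedBall (p (s 0)) (R / μ) := by
  rw [cylinder_succ hμ, ← image_invBranch_closedBall_zero hμ]
  exact image_mono (cylinder_subset_closedBall_zero hμ hK N _)

lemma pairwise_disjoint_cylinder (hμ : 0 < μ)
    (hK : ∀ i, closedBall (p i) (R / μ) ⊆ closedBall 0 R)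
    (hdisj : Pairwise (Disjoint on fun i => closedBall (p i) (R / μ))) (N : ℕ) :
    Pairwise (Disjoint on cylinder μ R p N) := by
  induction N with
  | zero => exact fun s t hst => (hst (Subsingleton.elim s t)).elim
  | succ N ih =>
    intro s t hst
    by_cases h0 : s 0 = t 0
    · have htail : Fin.tail s ≠ Fin.tail t := fun h =>
        hst (by rw [← Fin.cons_self_tail s, ← Fin.cons_self_tail t, h0, h])
      simp only [onFun, cylinder_succ hμ, h0]
      exact (disjoint_image_iff (invBranch_injective hμ _)).mpr (ih htail)
    · exact (hdisj h0).mono (cylinder_succ_subset hμ hK N s) (cylinder_succ_subset hμ hK N t)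

lemma injective_wordMap_zero (hμ : 0 < μ) (hR : 0 ≤ R)
    (hK : ∀ i, closedBall (p i) (R / μ) ⊆ closedBall 0 R)
    (hdisj : Pairwise (Disjoint on fun i => closedBall (p i) (R / μ))) (N : ℕ) :
    Injective fun s : Fin N → I => wordMap μ p N s 0 := by
  intro s t h
  by_contra hst
  have hr : 0 ≤ R / μ ^ N := by positivity
  exact (pairwise_disjoint_cylinder hμ hK hdisj N hst).ne_of_mem (mem_closedBall_self hr)
    (mem_closedBall_self hr) h

variable {f : E → E}

lemma invBranch_apply_of_mem (hμ : μ ≠ 0)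
    (hf : ∀ i, ∀ y ∈ closedBall (p i) (R / μ), f y = μ • (y - p i)) {i : I} {x : E}
    (hx : x ∈ closedBall (p i) (R / μ)) : invBranch μ (p i) (f x) = x := by
  rw [hf i x hx, invBranch_smul_sub hμ]

lemma apply_invBranch_of_mem (hμ : μ ≠ 0)
    (hf : ∀ i, ∀ y ∈ closedBall (p i) (R / μ), f y = μ • (y - p i)) {i : I} {y : E}
    (hy : invBranch μ (p i) y ∈ closedBall (p i) (R / μ)) : f (invBranch μ (p i) y) = y := by
  rw [hf i _ hy, smul_sub_invBranch hμ]

lemma apply_mem_closedBall_zero (hμ : 0 < μ)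
    (hf : ∀ i, ∀ y ∈ closedBall (p i) (R / μ), f y = μ • (y - p i)) {i : I} {x : E}
    (hx : x ∈ closedBall (p i) (R / μ)) : f x ∈ closedBall 0 R := by
  rw [mem_closedBall_zero_iff, hf i x hx, norm_smul, Real.norm_of_nonneg hμ.le]
  rw [mem_closedBall, dist_eq_norm] at hx
  calc μ * ‖x - p i‖ ≤ μ * (R / μ) := by gcongr
    _ = R := mul_div_cancel₀ R hμ.ne'

lemma inter_closedBall_eq_iUnion_cylinder (hμ : 0 < μ)
    (hK : ∀ i, closedBall (p i) (R / μ) ⊆ closedBall 0 R)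
    (hf : ∀ i, ∀ y ∈ closedBall (p i) (R / μ), f y = μ • (y - p i)) (N : ℕ) :
    {x | ∀ n < N, f^[n] x ∈ ⋃ i, closedBall (p i) (R / μ)} ∩ closedBall 0 R =
      ⋃ s, cylinder μ R p N s := by
  induction N with
  | zero => ext x; simp [cylinder, wordMap]
  | succ N ih =>
    ext x
    simp only [mem_inter_iff, mem_ofPred_eq, Nat.forall_lt_succ_left, iterate_zero, id_eq,
      iterate_succ_apply]
    constructor
    · rintro ⟨⟨hxK, hfx⟩, -⟩
      obtain ⟨i, hi⟩ := mem_iUnion.mp hxK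
      have hfx' : f x ∈ ⋃ t, cylinder μ R p N t := ih ▸ ⟨hfx, apply_mem_closedBall_zero hμ hf hi⟩
      obtain ⟨t, ht⟩ := mem_iUnion.mp hfx'
      refine mem_iUnion.mpr ⟨Fin.cons i t, ?_⟩
      rw [cylinder_succ hμ, Fin.cons_zero, Fin.tail_cons]
      exact ⟨f x, ht, invBranch_apply_of_mem hμ.ne' hf hi⟩
    · intro hx
      obtain ⟨s, hs⟩ := mem_iUnion.mp hx
      have hxK := cylinder_succ_subset hμ hK N s hs
      rw [cylinder_succ hμ] at hs
      obtain ⟨y, hy, rfl⟩ := hs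
      have hy' : y ∈ _ ∩ _ := ih ▸ mem_iUnion.mpr ⟨_, hy⟩
      rw [apply_invBranch_of_mem hμ.ne' hf hxK]
      exact ⟨⟨mem_iUnion.mpr ⟨_, hxK⟩, hy'.1⟩, hK _ hxK⟩

lemma maximalInvariantSet_subset_iUnion_cylinder (hμ : 0 < μ)
    (hK : ∀ i, closedBall (p i) (R / μ) ⊆ closedBall 0 R)
    (hf : ∀ i, ∀ y ∈ closedBall (p i) (R / μ), f y = μ • (y - p i)) (N : ℕ) :
    maximalInvariantSet f (⋃ i, closedBall (p i) (R / μ)) ⊆ ⋃ s, cylinder μ R p N s := by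
  intro x hx
  rw [← inter_closedBall_eq_iUnion_cylinder hμ hK hf N]
  obtain ⟨i, hi⟩ := mem_iUnion.mp (maximalInvariantSet_subset hx)
  exact ⟨fun n _ => hx n, hK i hi⟩

lemma mapsTo_invBranch_maximalInvariantSet (hμ : 0 < μ)
    (hK : ∀ i, closedBall (p i) (R / μ) ⊆ closedBall 0 R)
    (hf : ∀ i, ∀ y ∈ closedBall (p i) (R / μ), f y = μ • (y - p i)) (i : I) :
    MapsTo (invBranch μ (p i)) (maximalInvariantSet f (⋃ i, closedBall (p i) (R / μ)))
      (maximalInvariantSet f (⋃ i, closedBall (p i) (R / μ))) := by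
  intro y hy n
  obtain ⟨j, hj⟩ := mem_iUnion.mp (maximalInvariantSet_subset hy)
  have hx : invBranch μ (p i) y ∈ closedBall (p i) (R / μ) := by
    rw [← image_invBranch_closedBall_zero hμ]
    exact mem_image_of_mem _ (hK j hj)
  cases n with
  | zero => exact mem_iUnion.mpr ⟨i, hx⟩
  | succ n => rw [iterate_succ_apply, apply_invBranch_of_mem hμ.ne' hf hx]; exact hy n

lemma coverNum_maximalInvariantSet_le [Fintype I] (hμ : 0 < μ)
    (hK : ∀ i, closedBall (p i) (R / μ) ⊆ closedBall 0 R)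
    (hf : ∀ i, ∀ y ∈ closedBall (p i) (R / μ), f y = μ • (y - p i)) {n : ℕ} {ε : ℝ}
    (hε : R / μ ^ n < ε) :
    coverNum (maximalInvariantSet f (⋃ i, closedBall (p i) (R / μ))) ε ≤
      Fintype.card I ^ n := by
  simpa using coverNum_le_card_of_subset_iUnion_closedBall _
    (maximalInvariantSet_subset_iUnion_cylinder hμ hK hf n) hε

/-- The images of `z` under the words of length `n` lie within `‖z‖ / μ ^ n` of the centres of
the disjoint cylinders of radius `R / μ ^ n`, so they are `2 (R - ‖z‖) / μ ^ n`-separated. -/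
lemma le_coverNum_maximalInvariantSet [Fintype I] (hμ : 1 < μ)
    (hK : ∀ i, closedBall (p i) (R / μ) ⊆ closedBall 0 R)
    (hdisj : Pairwise (Disjoint on fun i => closedBall (p i) (R / μ)))
    (hf : ∀ i, ∀ y ∈ closedBall (p i) (R / μ), f y = μ • (y - p i)) {z : E}
    (hz : z ∈ maximalInvariantSet f (⋃ i, closedBall (p i) (R / μ))) {n : ℕ} {ε : ℝ}
    (hε : 0 < ε) (hεn : ε ≤ (R - ‖z‖) / μ ^ n) :
    Fintype.card I ^ n ≤
      coverNum (maximalInvariantSet f (⋃ i, closedBall (p i) (R / μ))) ε := by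
  have hμ0 : 0 < μ := one_pos.trans hμ
  have hzR : ‖z‖ ≤ R := by
    obtain ⟨i, hi⟩ := mem_iUnion.mp (maximalInvariantSet_subset hz)
    simpa using hK i hi
  have hr : 0 ≤ R / μ ^ n := div_nonneg ((norm_nonneg z).trans hzR) (by positivity)
  have hnear (s : Fin n → I) : dist (wordMap μ p n s z) (wordMap μ p n s 0) ≤ ‖z‖ / μ ^ n := by
    rw [← mem_closedBall, ← image_wordMap_closedBall hμ0]
    exact mem_image_of_mem _ (by simp)
  have hsep : Pairwise fun s t : Fin n → I =>
      2 * ε ≤ dist (wordMap μ p n s z) (wordMap μ p n t z) := by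
    intro s t hst
    have hfar := (disjoint_closedBall_closedBall_iff hr hr).mp
      (pairwise_disjoint_cylinder hμ0 hK hdisj n hst)
    have h4 := dist_triangle4 (wordMap μ p n s 0) (wordMap μ p n s z) (wordMap μ p n t z)
      (wordMap μ p n t 0)
    rw [sub_div] at hεn
    linarith [hnear s, hnear t, dist_comm (wordMap μ p n s 0) (wordMap μ p n s z)]
  obtain ⟨N, hN⟩ := pow_unbounded_of_one_lt (R / ε) hμ
  have hRN : R / μ ^ N < ε := by
    rwa [div_lt_iff₀ hε, ← div_lt_iff₀' (by positivity)] at hN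
  have hcov := exists_finset_ball_cover_of_subset_iUnion_closedBall _
    (maximalInvariantSet_subset_iUnion_cylinder hμ0 hK hf N) hRN
  simpa using card_le_coverNum_of_separated _
    (fun s => mapsTo_wordMap (mapsTo_invBranch_maximalInvariantSet hμ0 hK hf) n s hz) hsep
    (hcov.imp fun _ ht => ht.2)

lemma tendsto_log_coverNum_maximalInvariantSet [Fintype I] [Nonempty I] (hμ : 1 < μ)
    (hK : ∀ i, closedBall (p i) (R / μ) ⊆ closedBall 0 R)
    (hdisj : Pairwise (Disjoint on fun i => closedBall (p i) (R / μ)))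
    (hf : ∀ i, ∀ y ∈ closedBall (p i) (R / μ), f y = μ • (y - p i)) {z : E}
    (hz : z ∈ maximalInvariantSet f (⋃ i, closedBall (p i) (R / μ))) (hzR : ‖z‖ < R) :
    Tendsto (fun ε => log (coverNum (maximalInvariantSet f (⋃ i, closedBall (p i) (R / μ))) ε)
      / log (1 / ε)) (𝓝[>] 0) (𝓝 (log (Fintype.card I) / log μ)) :=
  tendsto_log_div_log_one_div_of_pow_bounds Fintype.card_pos hμ (sub_pos.mpr hzR)
    ((norm_nonneg z).trans_lt hzR)
    (fun _ _ hε hεn => le_coverNum_maximalInvariantSet hμ hK hdisj hf hz hε hεn)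
    (fun _ _ hε => coverNum_maximalInvariantSet_le (one_pos.trans hμ) hK hf hε)

/-- The fixed point `p i + (μ - 1)⁻¹ • p i` of the `i`-th branch. -/
lemma exists_mem_maximalInvariantSet_norm_lt [Nonempty I] (hμ : 2 ≤ μ) (hp : ∀ i, ‖p i‖ < R / 2)
    (hf : ∀ i, ∀ y ∈ closedBall (p i) (R / μ), f y = μ • (y - p i)) :
    ∃ z ∈ maximalInvariantSet f (⋃ i, closedBall (p i) (R / μ)), ‖z‖ < R := by
  obtain ⟨i⟩ : Nonempty I := inferInstance
  have hμ1 : 0 < μ - 1 := by linarith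
  set z := p i + (μ - 1)⁻¹ • p i
  have hzp : ‖z - p i‖ = ‖p i‖ / (μ - 1) := by
    rw [add_sub_cancel_left, norm_smul, norm_inv, Real.norm_of_nonneg hμ1.le, inv_mul_eq_div]
  have hz : z ∈ closedBall (p i) (R / μ) := by
    rw [mem_closedBall, dist_eq_norm, hzp, div_le_div_iff₀ hμ1 (by linarith)]
    nlinarith [hp i, norm_nonneg (p i)]
  have hfix : f z = z := by
    have hcoef : μ * (μ - 1)⁻¹ = 1 + (μ - 1)⁻¹ := by field_simp; ring
    rw [hf i z hz, add_sub_cancel_left, smul_smul, hcoef, add_smul, one_smul]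
  refine ⟨z, fun n => ?_, ?_⟩
  · rw [iterate_fixed hfix]
    exact mem_iUnion.mpr ⟨i, hz⟩
  · calc ‖z‖ ≤ ‖p i‖ + ‖p i‖ / (μ - 1) := hzp ▸ norm_le_norm_add_norm_sub' z (p i)
      _ ≤ ‖p i‖ + ‖p i‖ := by gcongr; exact div_le_self (norm_nonneg _) (by linarith)
      _ < R := by linarith [hp i]

end AffineExpandingMap

/-- The affine expanding system `f⁺(y) = μ(y - p⁺ᵢ)` on disjoint sup-norm balls
`B(p⁺ᵢ, 2/μ)`: the `N`-th approximation of the maximal forward invariant set is a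
disjoint union of `(#I)^N` closed balls of radius `2/μ^N`, and the upper box dimension
of `Λˢ(K⁺, f⁺)` equals `log (#I) / log μ`. -/
theorem stmt4 {m : ℕ} {I : Type*} [Fintype I] [Nonempty I] (μ : ℝ) (hμ : 2 < μ)
    (p : I → (Fin m → ℝ)) (hp : ∀ i, ‖p i‖ < 1)
    (hdisj : Pairwise (Function.onFun Disjoint (fun i => Metric.closedBall (p i) (2 / μ))))
    (f : (Fin m → ℝ) → (Fin m → ℝ))
    (hf : ∀ i, ∀ y ∈ Metric.closedBall (p i) (2 / μ), f y = μ • (y - p i)) :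
    (∀ N : ℕ, 1 ≤ N → ∃ c : (Fin N → I) → (Fin m → ℝ),
      Function.Injective c ∧
      Pairwise (Function.onFun Disjoint (fun s => Metric.closedBall (c s) (2 / μ ^ N))) ∧
      {x | ∀ n < N, f^[n] x ∈ ⋃ i, Metric.closedBall (p i) (2 / μ)} =
        ⋃ s : Fin N → I, Metric.closedBall (c s) (2 / μ ^ N)) ∧
    ubDim {x | ∀ n : ℕ, f^[n] x ∈ ⋃ i, Metric.closedBall (p i) (2 / μ)} =
      Real.log (Fintype.card I) / Real.log μ := by
  have hμ0 : 0 < μ := by linarith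
  have hp' : ∀ i, ‖p i‖ < 2 / 2 := by simpa using hp
  have hK i := closedBall_subset_closedBall_zero_of_norm_lt hμ.le (hp' i)
  refine ⟨fun N hN => ⟨fun s => wordMap μ p N s 0,
    injective_wordMap_zero hμ0 zero_le_two hK hdisj N, pairwise_disjoint_cylinder hμ0 hK hdisj N,
    ?_⟩, ?_⟩
  · refine (inter_eq_left.mpr fun x hx => ?_).symm.trans
      (inter_closedBall_eq_iUnion_cylinder hμ0 hK hf N)
    obtain ⟨i, hi⟩ := mem_iUnion.mp (hx 0 hN)
    exact hK i hi
  · obtain ⟨z, hz, hzR⟩ := exists_mem_maximalInvariantSet_norm_lt hμ.le hp' hf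
    exact (tendsto_log_coverNum_maximalInvariantSet (by linarith) hK hdisj hf hz hzR).limsup_eq
end

section
/- Let f : ℝ² → ℝ² be a C¹ map that equals f₁(x,y) = ((7/6)(x+1), 8(y+1)) on a neighborhood of K₁ = [−13,11] × [−3/2,−1/2] and equals f₂(x,y) = ((7/6)(x−1), 8(y−1)) on a neighborhood of K₂ = [−11,13] × [1/2,3/2]. Then for every C¹ function σ : [−2,2] → (−2,2) with |σ'(t)| < 1/5 for all t, the graph Γ(σ) = {(σ(t), t) : t ∈ [−2,2]} intersects the maximal forward invariant set Λˢ(K₁ ∪ K₂, f) = ⋂_{n≥0} f⁻ⁿ(K₁ ∪ K₂). -/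
/-!
A nearly vertical curve over `[-2, 2]` crosses both strips `y ∈ [-5/4, -3/4] ⊆ K₁` and
`y ∈ [3/4, 5/4] ⊆ K₂`, and the image under `f` of either piece is again a curve over `[-2, 2]`: the
vertical factor `8` stretches the window of height `1/2` to height `4`, while the horizontal factor
`7/6` multiplies slopes by `7/48`. Choosing the piece according to where the curve lies keeps the new
curve inside `(-2, 2)`, so the class of such curves is invariant. Hence for each `n` some point of the
curve stays in `K₁ ∪ K₂` for `n` steps, and a nested compactness argument gives a point that stays
forever.
-/

open Set

theorem IsCompact.exists_forall_iterate_mem {α X : Type*} [TopologicalSpace α]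
    [TopologicalSpace X] {I : Set α} (hI : IsCompact I) {f : X → X} (hf : Continuous f)
    {K : Set X} (hK : IsClosed K) {γ : α → X} (hγ : Continuous γ)
    (h : ∀ n, ∃ t ∈ I, ∀ k < n, f^[k] (γ t) ∈ K) :
    ∃ t ∈ I, ∀ n, f^[n] (γ t) ∈ K := by
  have hclosed (k : ℕ) : IsClosed ((f^[k] ∘ γ) ⁻¹' K) :=
    hK.preimage ((hf.iterate k).comp hγ)
  obtain ⟨t, htI, ht⟩ := hI.inter_iInter_nonempty _ hclosed fun u => by
    obtain ⟨n, hun⟩ := u.exists_nat_subset_range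
    obtain ⟨t, htI, ht⟩ := h n
    exact ⟨t, htI, mem_iInter₂.2 fun k hk => ht k (Finset.mem_range.1 (hun hk))⟩
  exact ⟨t, htI, mem_iInter.1 ht⟩

theorem exists_forall_lt_iterate_mem_of_forall_exists_step {α β X : Type*} {f : X → X}
    {K : Set X} {I : Set α} (hI : I.Nonempty) {P : β → Prop} {γ : β → α → X}
    (hstep : ∀ b, P b → ∃ b', P b' ∧ ∀ s ∈ I, ∃ t ∈ I, γ b t ∈ K ∧ f (γ b t) = γ b' s)
    (n : ℕ) {b : β} (hb : P b) : ∃ t ∈ I, ∀ k < n, f^[k] (γ b t) ∈ K := by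
  induction n generalizing b with
  | zero => exact hI.imp fun t ht => ⟨ht, fun k hk => absurd hk k.not_lt_zero⟩
  | succ n ih =>
    obtain ⟨b', hb', hbb'⟩ := hstep b hb
    obtain ⟨s, hsI, hs⟩ := ih hb'
    obtain ⟨t, htI, htK, hft⟩ := hbb' s hsI
    refine ⟨t, htI, fun k hk => ?_⟩
    cases k with
    | zero => exact htK
    | succ k => rw [Function.iterate_succ_apply, hft]; exact hs k (by omega)

namespace Blender

/-- `g` stands for the curve `{(g t, t) : t ∈ [-2, 2]}`, a graph over the vertical axis. -/
def NearlyVertical (g : ℝ → ℝ) : Prop :=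
  MapsTo g (Icc (-2) 2) (Ioo (-2) 2) ∧ LipschitzOnWith (1 / 5) g (Icc (-2) 2)

/-- For `ε = -1` (resp. `1`) and `t = ε + s / 8`, the map `f₁` (resp. `f₂`) sends `(g t, t)` to
`(renormalize ε g s, s)`. -/
noncomputable def renormalize (ε : ℝ) (g : ℝ → ℝ) (s : ℝ) : ℝ := 7 / 6 * (g (ε + s / 8) - ε)

lemma add_div_eight_mem_Icc {ε s : ℝ} (hs : s ∈ Icc (-2 : ℝ) 2) :
    ε + s / 8 ∈ Icc (ε - 1 / 4) (ε + 1 / 4) :=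
  ⟨by linarith [hs.1], by linarith [hs.2]⟩

lemma lipschitzOnWith_renormalize {g : ℝ → ℝ} (hg : LipschitzOnWith (1 / 5) g (Icc (-2) 2))
    {ε : ℝ} (hε : ε ∈ Icc (-7 / 4 : ℝ) (7 / 4)) :
    LipschitzOnWith (1 / 5) (renormalize ε g) (Icc (-2) 2) := by
  have hmaps : MapsTo (fun s : ℝ => ε + s / 8) (Icc (-2) 2) (Icc (-2) 2) := fun s hs =>
    have := add_div_eight_mem_Icc (ε := ε) hs
    ⟨by linarith [this.1, hε.1], by linarith [this.2, hε.2]⟩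
  refine LipschitzOnWith.of_dist_le_mul fun s hs u hu => ?_
  have hg' := hg.dist_le_mul _ (hmaps hs) _ (hmaps hu)
  simp only [Real.dist_eq, NNReal.coe_div, NNReal.coe_one, NNReal.coe_ofNat] at hg' ⊢
  calc |7 / 6 * (g (ε + s / 8) - ε) - 7 / 6 * (g (ε + u / 8) - ε)|
      = 7 / 6 * |g (ε + s / 8) - g (ε + u / 8)| := by
        rw [← mul_sub, sub_sub_sub_cancel_right, abs_mul, abs_of_pos (by norm_num : (0 : ℝ) < 7 / 6)]
    _ ≤ 7 / 6 * (1 / 5 * |ε + s / 8 - (ε + u / 8)|) := by gcongr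
    _ = 7 / 48 * (1 / 5 * |s - u|) := by
        rw [show ε + s / 8 - (ε + u / 8) = (s - u) / 8 by ring, abs_div,
          abs_of_pos (by norm_num : (0 : ℝ) < 8)]
        ring
    _ ≤ 1 / 5 * |s - u| := by nlinarith [abs_nonneg (s - u)]

lemma mapsTo_renormalize_neg_one {g : ℝ → ℝ} (hg : MapsTo g (Icc (-2) 2) (Ioo (-2) 2))
    (hlt : ∀ y ∈ Icc (-5 / 4 : ℝ) (-3 / 4), g y < 5 / 7) :
    MapsTo (renormalize (-1) g) (Icc (-2) 2) (Ioo (-2) 2) := fun s hs => by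
  have hy := add_div_eight_mem_Icc (ε := -1) hs
  have hgy := hg (show -1 + s / 8 ∈ Icc (-2 : ℝ) 2 from ⟨by linarith [hy.1], by linarith [hy.2]⟩)
  have := hlt (-1 + s / 8) ⟨by linarith [hy.1], by linarith [hy.2]⟩
  exact ⟨by unfold renormalize; linarith [hgy.1], by unfold renormalize; linarith⟩

/-- Over the upper window the graph stays above `5/7 - 1/2`, because it is `1/5`-Lipschitz and the
two windows are at distance at most `5/2`. -/
lemma NearlyVertical.mapsTo_renormalize_one {g : ℝ → ℝ} (hg : NearlyVertical g)
    {y₀ : ℝ} (hy₀ : y₀ ∈ Icc (-5 / 4 : ℝ) (-3 / 4)) (hge : 5 / 7 ≤ g y₀) :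
    MapsTo (renormalize 1 g) (Icc (-2) 2) (Ioo (-2) 2) := fun s hs => by
  have hy := add_div_eight_mem_Icc (ε := 1) hs
  have hy' : 1 + s / 8 ∈ Icc (-2 : ℝ) 2 := ⟨by linarith [hy.1], by linarith [hy.2]⟩
  have hgy := hg.1 hy'
  have hlip := hg.2.dist_le_mul (1 + s / 8) hy' y₀ ⟨by linarith [hy₀.1], by linarith [hy₀.2]⟩
  have hdist : |1 + s / 8 - y₀| ≤ 5 / 2 := by
    rw [abs_le]; constructor <;> linarith [hy.1, hy.2, hy₀.1, hy₀.2]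
  rw [Real.dist_eq, Real.dist_eq, abs_le] at hlip
  norm_num at hlip
  exact ⟨by unfold renormalize; linarith [hlip.1], by unfold renormalize; linarith [hgy.2]⟩

def K₁ : Set (ℝ × ℝ) := Icc (-13 : ℝ) 11 ×ˢ Icc (-(3 : ℝ)/2) (-(1 : ℝ)/2)

def K₂ : Set (ℝ × ℝ) := Icc (-11 : ℝ) 13 ×ˢ Icc ((1 : ℝ)/2) ((3 : ℝ)/2)

/-- The piece of the curve over `[-5/4, -3/4]` is used unless it reaches `x ≥ 5/7`; then the piece
over `[3/4, 5/4]` is. -/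
theorem NearlyVertical.exists_step {f : ℝ × ℝ → ℝ × ℝ}
    (hf₁ : ∀ q ∈ K₁, f q = ((7/6) * (q.1 + 1), 8 * (q.2 + 1)))
    (hf₂ : ∀ q ∈ K₂, f q = ((7/6) * (q.1 - 1), 8 * (q.2 - 1)))
    {g : ℝ → ℝ} (hg : NearlyVertical g) :
    ∃ g', NearlyVertical g' ∧ ∀ s ∈ Icc (-2 : ℝ) 2, ∃ t ∈ Icc (-2 : ℝ) 2,
      (g t, t) ∈ K₁ ∪ K₂ ∧ f (g t, t) = (g' s, s) := by
  by_cases hlt : ∀ y ∈ Icc (-5 / 4 : ℝ) (-3 / 4), g y < 5 / 7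
  · refine ⟨renormalize (-1) g, ⟨mapsTo_renormalize_neg_one hg.1 hlt,
      lipschitzOnWith_renormalize hg.2 (by norm_num)⟩, fun s hs => ?_⟩
    have hy := add_div_eight_mem_Icc (ε := -1) hs
    have hy' : -1 + s / 8 ∈ Icc (-2 : ℝ) 2 := ⟨by linarith [hy.1], by linarith [hy.2]⟩
    have hgy := hg.1 hy'
    have hq : (g (-1 + s / 8), -1 + s / 8) ∈ K₁ :=
      ⟨⟨by linarith [hgy.1], by linarith [hgy.2]⟩, ⟨by linarith [hy.1], by linarith [hy.2]⟩⟩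
    refine ⟨-1 + s / 8, hy', Or.inl hq, ?_⟩
    rw [hf₁ _ hq, renormalize]
    ext <;> ring
  · push Not at hlt
    obtain ⟨y₀, hy₀, hge⟩ := hlt
    refine ⟨renormalize 1 g, ⟨hg.mapsTo_renormalize_one hy₀ hge,
      lipschitzOnWith_renormalize hg.2 (by norm_num)⟩, fun s hs => ?_⟩
    have hy := add_div_eight_mem_Icc (ε := 1) hs
    have hy' : 1 + s / 8 ∈ Icc (-2 : ℝ) 2 := ⟨by linarith [hy.1], by linarith [hy.2]⟩
    have hgy := hg.1 hy'
    have hq : (g (1 + s / 8), 1 + s / 8) ∈ K₂ :=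
      ⟨⟨by linarith [hgy.1], by linarith [hgy.2]⟩, ⟨by linarith [hy.1], by linarith [hy.2]⟩⟩
    refine ⟨1 + s / 8, hy', Or.inr hq, ?_⟩
    rw [hf₂ _ hq, renormalize]
    ext <;> ring

end Blender

open Blender

/-- The 'blender Cantor set' in `ℝ²`: every nearly-vertical C¹ graph
`Γ(σ) = {(σ t, t) : t ∈ [-2,2]}` with `|σ'| < 1/5` meets the maximal forward
invariant set `Λˢ(K₁ ∪ K₂, f)`. -/
theorem stmt6 (f : ℝ × ℝ → ℝ × ℝ) (hf : ContDiff ℝ 1 f)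
    (h1 : ∃ U : Set (ℝ × ℝ), IsOpen U ∧
      (Icc (-13 : ℝ) 11 ×ˢ Icc (-(3 : ℝ)/2) (-(1 : ℝ)/2)) ⊆ U ∧
      ∀ q ∈ U, f q = ((7/6) * (q.1 + 1), 8 * (q.2 + 1)))
    (h2 : ∃ U : Set (ℝ × ℝ), IsOpen U ∧
      (Icc (-11 : ℝ) 13 ×ˢ Icc ((1 : ℝ)/2) ((3 : ℝ)/2)) ⊆ U ∧
      ∀ q ∈ U, f q = ((7/6) * (q.1 - 1), 8 * (q.2 - 1)))
    (σ : ℝ → ℝ) (hσ : ContDiff ℝ 1 σ)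
    (hσmem : ∀ t ∈ Icc (-2 : ℝ) 2, σ t ∈ Ioo (-2 : ℝ) 2)
    (hσd : ∀ t ∈ Icc (-2 : ℝ) 2, |deriv σ t| < 1/5) :
    ∃ t ∈ Icc (-2 : ℝ) 2, ∀ n : ℕ, f^[n] (σ t, t) ∈
      (Icc (-13 : ℝ) 11 ×ˢ Icc (-(3 : ℝ)/2) (-(1 : ℝ)/2)) ∪
      (Icc (-11 : ℝ) 13 ×ˢ Icc ((1 : ℝ)/2) ((3 : ℝ)/2)) := by
  obtain ⟨U₁, -, hKU₁, hfU₁⟩ := h1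
  obtain ⟨U₂, -, hKU₂, hfU₂⟩ := h2
  have hσlip : LipschitzOnWith (1 / 5) σ (Icc (-2) 2) :=
    (convex_Icc _ _).lipschitzOnWith_of_nnnorm_deriv_le
      (fun t _ => (hσ.differentiable one_ne_zero).differentiableAt)
      fun t ht => by rw [← NNReal.coe_le_coe, coe_nnnorm]; exact (hσd t ht).le
  have hstep (g : ℝ → ℝ) (hg : NearlyVertical g) : ∃ g', NearlyVertical g' ∧
      ∀ s ∈ Icc (-2 : ℝ) 2, ∃ t ∈ Icc (-2 : ℝ) 2, (g t, t) ∈ K₁ ∪ K₂ ∧ f (g t, t) = (g' s, s) :=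
    hg.exists_step (fun q hq => hfU₁ q (hKU₁ hq)) fun q hq => hfU₂ q (hKU₂ hq)
  have hfinite (n : ℕ) := exists_forall_lt_iterate_mem_of_forall_exists_step
    (nonempty_Icc.2 (by norm_num : (-2 : ℝ) ≤ 2)) hstep n (b := σ) ⟨hσmem, hσlip⟩
  exact isCompact_Icc.exists_forall_iterate_mem hf.continuous
    ((isClosed_Icc.prod isClosed_Icc).union (isClosed_Icc.prod isClosed_Icc))
    (hσ.continuous.prodMk continuous_id) hfinite
end

section
/- Let f : ℝ² → ℝ² equal f₁(x,y) = ((7/6)(x+1), 8(y+1)) on R₁ = [−5/2, 1/2] × [−5/4, −3/4] and f₂(x,y) = ((7/6)(x−1), 8(y−1)) on R₂ = [−1/2, 5/2] × [3/4, 5/4]. Let σ₀ : [−2,2] → (−2,2) be C¹ with |σ₀'| < 1/5. Then for each i ∈ {1,2} such that σ₀([−2,2]) ⊆ int [first-coordinate projection of Rᵢ], the image f(Γ(σ₀) ∩ Rᵢ) equals Γ(σ₁) for some C¹ function σ₁ : [−2,2] → (−2,2) with |σ₁'| < 1/5, where Γ(σ) = {(σ(t), t) : t ∈ [−2,2]}.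 -/
open Set

/-! The rectangles are `R₁ = blenderRect (-1)` and `R₂ = blenderRect 1`. On `blenderRect ε` the
map is the affine map `(x, y) ↦ (7/6 (x - ε), 8 (y - ε))`, which stretches the horizontal strip
`|y - ε| ≤ 1/4` onto `|y| ≤ 2`. The part of the graph `x = σ₀ y` inside the rectangle is the graph
of `σ₀` over that strip, so its image is the graph of `σ₁ s = 7/6 (σ₀ (s/8 + ε) - ε)` over
`[-2, 2]`. Its values lie in `7/6 · (-3/2, 3/2) ⊆ (-2, 2)` and its slope is `7/48` times that
of `σ₀`. -/

def verticalGraph (I : Set ℝ) (σ : ℝ → ℝ) : Set (ℝ × ℝ) := {q | ∃ t ∈ I, q = (σ t, t)}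

theorem verticalGraph_subset_prod {J X : Set ℝ} {σ : ℝ → ℝ} (hσ : MapsTo σ J X) :
    verticalGraph J σ ⊆ X ×ˢ J := by
  rintro _ ⟨t, ht, rfl⟩
  exact ⟨hσ ht, ht⟩

theorem verticalGraph_inter_prod {I J X : Set ℝ} {σ : ℝ → ℝ} (hJ : J ⊆ I) (hσ : MapsTo σ J X) :
    verticalGraph I σ ∩ X ×ˢ J = verticalGraph J σ := by
  refine Subset.antisymm ?_ fun q hq => ⟨?_, verticalGraph_subset_prod hσ hq⟩
  · rintro _ ⟨⟨t, -, rfl⟩, -, ht⟩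
    exact ⟨t, ht, rfl⟩
  · obtain ⟨t, ht, rfl⟩ := hq
    exact ⟨t, hJ ht, rfl⟩

theorem image_verticalGraph_affine (σ : ℝ → ℝ) (a : ℝ) {b : ℝ} (hb : 0 < b) (c d r : ℝ) :
    (fun q : ℝ × ℝ => (a * (q.1 - c), b * (q.2 - d))) '' verticalGraph (Icc (d - r) (d + r)) σ =
      verticalGraph (Icc (-(b * r)) (b * r)) (fun s => a * (σ (s / b + d) - c)) := by
  ext p
  constructor
  · rintro ⟨_, ⟨t, ⟨ht₁, ht₂⟩, rfl⟩, rfl⟩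
    refine ⟨b * (t - d), ⟨by nlinarith, by nlinarith⟩, ?_⟩
    simp only [mul_div_cancel_left₀ _ hb.ne', sub_add_cancel]
  · rintro ⟨s, ⟨hs₁, hs₂⟩, rfl⟩
    have hs : -r ≤ s / b ∧ s / b ≤ r := by
      rw [le_div_iff₀ hb, div_le_iff₀ hb]
      constructor <;> linarith
    refine ⟨_, ⟨s / b + d, ⟨by linarith [hs.1], by linarith [hs.2]⟩, rfl⟩, ?_⟩
    simp only [add_sub_cancel_right, mul_div_cancel₀ _ hb.ne']

theorem hasDerivAt_affine_reparam {σ : ℝ → ℝ} {s σ' : ℝ} (a b c d : ℝ)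
    (hσ : HasDerivAt σ σ' (s / b + d)) :
    HasDerivAt (fun s => a * (σ (s / b + d) - c)) (a / b * σ') s := by
  have hin : HasDerivAt (fun s : ℝ => s / b + d) (1 / b) s :=
    ((hasDerivAt_id s).div_const b).add_const d
  exact (((hσ.comp s hin).sub_const c).const_mul a).congr_deriv (by ring)

def blenderRect (ε : ℝ) : Set (ℝ × ℝ) :=
  Icc (ε - 3/2) (ε + 3/2) ×ˢ Icc (ε - 1/4) (ε + 1/4)

theorem exists_verticalGraph_eq_image_inter_blenderRect (f : ℝ × ℝ → ℝ × ℝ) (ε : ℝ)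
    (hε₁ : -(7 : ℝ)/4 ≤ ε) (hε₂ : ε ≤ 7/4)
    (hf : EqOn f (fun q => (7/6 * (q.1 - ε), 8 * (q.2 - ε))) (blenderRect ε))
    {σ₀ : ℝ → ℝ} (hσ : ContDiff ℝ 1 σ₀) (hd : ∀ t ∈ Icc (-2 : ℝ) 2, |deriv σ₀ t| < 1/5)
    (hcov : ∀ t ∈ Icc (-2 : ℝ) 2, σ₀ t ∈ Ioo (ε - 3/2) (ε + 3/2)) :
    ∃ σ₁ : ℝ → ℝ, ContDiff ℝ 1 σ₁ ∧
      (∀ t ∈ Icc (-2 : ℝ) 2, σ₁ t ∈ Ioo (-2 : ℝ) 2 ∧ |deriv σ₁ t| < 1/5) ∧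
      f '' (verticalGraph (Icc (-2) 2) σ₀ ∩ blenderRect ε) = verticalGraph (Icc (-2) 2) σ₁ := by
  have hstrip : Icc (ε - 1/4) (ε + 1/4) ⊆ Icc (-2 : ℝ) 2 :=
    Icc_subset_Icc (by linarith) (by linarith)
  have hmaps : MapsTo σ₀ (Icc (ε - 1/4) (ε + 1/4)) (Icc (ε - 3/2) (ε + 3/2)) :=
    fun t ht => Ioo_subset_Icc_self (hcov t (hstrip ht))
  have hreparam : ∀ s ∈ Icc (-2 : ℝ) 2, s / 8 + ε ∈ Icc (-2 : ℝ) 2 := fun s ⟨hs₁, hs₂⟩ =>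
    hstrip ⟨by linarith, by linarith⟩
  refine ⟨fun s => 7/6 * (σ₀ (s / 8 + ε) - ε), by fun_prop, fun s hs => ⟨?_, ?_⟩, ?_⟩
  · obtain ⟨h₁, h₂⟩ := hcov _ (hreparam s hs)
    constructor <;> linarith
  · have hσd := (hσ.differentiable one_ne_zero (s / 8 + ε)).hasDerivAt
    rw [(hasDerivAt_affine_reparam _ _ _ _ hσd).deriv, abs_mul,
      abs_of_pos (by norm_num : (0 : ℝ) < 7/6/8)]
    linarith [hd _ (hreparam s hs)]
  · rw [blenderRect, verticalGraph_inter_prod hstrip hmaps,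
      (hf.mono (verticalGraph_subset_prod hmaps)).image_eq,
      image_verticalGraph_affine σ₀ _ (by norm_num : (0 : ℝ) < 8)]
    norm_num

theorem stmt7_general (f : ℝ × ℝ → ℝ × ℝ)
    (hf1 : ∀ q ∈ Icc (-(5 : ℝ)/2) (1/2) ×ˢ Icc (-(5 : ℝ)/4) (-(3 : ℝ)/4),
      f q = ((7/6) * (q.1 + 1), 8 * (q.2 + 1)))
    (hf2 : ∀ q ∈ Icc (-(1 : ℝ)/2) (5/2) ×ˢ Icc ((3 : ℝ)/4) ((5 : ℝ)/4),
      f q = ((7/6) * (q.1 - 1), 8 * (q.2 - 1)))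
    (σ₀ : ℝ → ℝ) (hσ : ContDiff ℝ 1 σ₀)
    (hd : ∀ t ∈ Icc (-2 : ℝ) 2, |deriv σ₀ t| < 1/5)
    (i : Fin 2)
    (hcov : ∀ t ∈ Icc (-2 : ℝ) 2,
      σ₀ t ∈ (if i = 0 then Ioo (-(5 : ℝ)/2) (1/2) else Ioo (-(1 : ℝ)/2) (5/2))) :
    ∃ σ₁ : ℝ → ℝ, ContDiff ℝ 1 σ₁ ∧
      (∀ t ∈ Icc (-2 : ℝ) 2, σ₁ t ∈ Ioo (-2 : ℝ) 2 ∧ |deriv σ₁ t| < 1/5) ∧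
      f '' ({q : ℝ × ℝ | ∃ t ∈ Icc (-2 : ℝ) 2, q = (σ₀ t, t)} ∩
        (if i = 0 then Icc (-(5 : ℝ)/2) (1/2) ×ˢ Icc (-(5 : ℝ)/4) (-(3 : ℝ)/4)
          else Icc (-(1 : ℝ)/2) (5/2) ×ˢ Icc ((3 : ℝ)/4) ((5 : ℝ)/4))) =
      {q : ℝ × ℝ | ∃ t ∈ Icc (-2 : ℝ) 2, q = (σ₁ t, t)} := by
  fin_cases i
  · have hR : Icc (-(5 : ℝ)/2) (1/2) ×ˢ Icc (-(5 : ℝ)/4) (-(3 : ℝ)/4) = blenderRect (-1) := by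
      norm_num [blenderRect]
    simp only [Fin.zero_eta, if_true, hR] at hcov ⊢
    refine exists_verticalGraph_eq_image_inter_blenderRect f (-1) (by norm_num) (by norm_num)
      (fun q hq => (hf1 q (hR ▸ hq)).trans (by norm_num)) hσ hd fun t ht => ?_
    convert hcov t ht using 1
    norm_num
  · have hR : Icc (-(1 : ℝ)/2) (5/2) ×ˢ Icc ((3 : ℝ)/4) ((5 : ℝ)/4) = blenderRect 1 := by
      norm_num [blenderRect]
    simp only [Fin.mk_one, one_ne_zero, if_false, hR] at hcov ⊢
    refine exists_verticalGraph_eq_image_inter_blenderRect f 1 (by norm_num) (by norm_num)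
      (fun q hq => hf2 q (hR ▸ hq)) hσ hd fun t ht => ?_
    convert hcov t ht using 1
    norm_num

/-- Graph-transformation step for the blender Cantor set: applying `f` to the portion
of a nearly-vertical graph inside the rectangle `Rᵢ` yields another nearly-vertical
graph over the full interval `[-2,2]` with the same bounds. -/
theorem stmt7 (f : ℝ × ℝ → ℝ × ℝ)
    (hf1 : ∀ q ∈ Icc (-(5 : ℝ)/2) (1/2) ×ˢ Icc (-(5 : ℝ)/4) (-(3 : ℝ)/4),
      f q = ((7/6) * (q.1 + 1), 8 * (q.2 + 1)))
    (hf2 : ∀ q ∈ Icc (-(1 : ℝ)/2) (5/2) ×ˢ Icc ((3 : ℝ)/4) ((5 : ℝ)/4),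
      f q = ((7/6) * (q.1 - 1), 8 * (q.2 - 1)))
    (σ₀ : ℝ → ℝ) (hσ : ContDiff ℝ 1 σ₀)
    (hmem : ∀ t ∈ Icc (-2 : ℝ) 2, σ₀ t ∈ Ioo (-2 : ℝ) 2)
    (hd : ∀ t ∈ Icc (-2 : ℝ) 2, |deriv σ₀ t| < 1/5)
    (i : Fin 2)
    (hcov : ∀ t ∈ Icc (-2 : ℝ) 2,
      σ₀ t ∈ (if i = 0 then Ioo (-(5 : ℝ)/2) (1/2) else Ioo (-(1 : ℝ)/2) (5/2))) :
    ∃ σ₁ : ℝ → ℝ, ContDiff ℝ 1 σ₁ ∧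
      (∀ t ∈ Icc (-2 : ℝ) 2, σ₁ t ∈ Ioo (-2 : ℝ) 2 ∧ |deriv σ₁ t| < 1/5) ∧
      f '' ({q : ℝ × ℝ | ∃ t ∈ Icc (-2 : ℝ) 2, q = (σ₀ t, t)} ∩
        (if i = 0 then Icc (-(5 : ℝ)/2) (1/2) ×ˢ Icc (-(5 : ℝ)/4) (-(3 : ℝ)/4)
          else Icc (-(1 : ℝ)/2) (5/2) ×ˢ Icc ((3 : ℝ)/4) ((5 : ℝ)/4))) =
      {q : ℝ × ℝ | ∃ t ∈ Icc (-2 : ℝ) 2, q = (σ₁ t, t)} :=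
  stmt7_general f hf1 hf2 σ₀ hσ hd i hcov
end

section
/- Let P : ℝ^{l+m} → ℝˡ and Q : ℝ^{l+m} → ℝᵐ be the coordinate projections, and let f be an affine map satisfying D(P∘f) v = L⁻ (DP v) and D(Q∘f) v = L⁺ (DQ v) for linear maps L⁻ : ℝˡ → ℝˡ with ‖L⁻‖ ≤ a and L⁺ : ℝᵐ → ℝᵐ invertible with ‖(L⁺)⁻¹‖ ≤ b⁻¹, where a < b. Then for every θ > 0, f satisfies the θ-cone condition with respect to (P,Q): there is θ' < θ such that Df⁻¹ maps the cone {‖DQ v‖ ≤ θ‖DP v‖} into {‖DQ v‖ ≤ θ'‖DP v‖}, Df maps {‖DP v‖ ≤ θ‖DQ v‖} into {‖DP v‖ ≤ θ'‖DQ v‖}, and moreover ‖D(P∘f⁻¹)v‖ ≥ (a⁻¹)‖DP v‖ on the first cone and ‖D(Q∘f)v‖ ≥ b‖DQ v‖ on the second. -/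
/-- A block-diagonal affine map whose horizontal differential `L⁻` contracts by at most
`a` and whose vertical differential `L⁺` expands by at least `b > a` satisfies the
`θ`-cone condition for every `θ > 0`, with the stated expansion estimates. -/
theorem stmt14 (l m : ℕ) (a b : ℝ) (ha : 0 < a) (hab : a < b)
    (Lm : (Fin l → ℝ) →L[ℝ] (Fin l → ℝ)) (hLm : ‖Lm‖ ≤ a)
    (Lp : (Fin m → ℝ) ≃L[ℝ] (Fin m → ℝ))
    (hLp : ‖(Lp.symm : (Fin m → ℝ) →L[ℝ] (Fin m → ℝ))‖ ≤ b⁻¹) :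
    ∀ θ : ℝ, 0 < θ → ∃ θ' : ℝ, 0 ≤ θ' ∧ θ' < θ ∧
      (∀ (v₁ : Fin l → ℝ) (v₂ : Fin m → ℝ), ‖Lp v₂‖ ≤ θ * ‖Lm v₁‖ →
        ‖v₂‖ ≤ θ' * ‖v₁‖ ∧ a⁻¹ * ‖Lm v₁‖ ≤ ‖v₁‖) ∧
      (∀ (v₁ : Fin l → ℝ) (v₂ : Fin m → ℝ), ‖v₁‖ ≤ θ * ‖v₂‖ →
        ‖Lm v₁‖ ≤ θ' * ‖Lp v₂‖ ∧ b * ‖v₂‖ ≤ ‖Lp v₂‖) := by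
  have hb : (0:ℝ) < b := ha.trans hab
  have key1 : ∀ v₁ : Fin l → ℝ, ‖Lm v₁‖ ≤ a * ‖v₁‖ := fun v₁ =>
    (Lm.le_opNorm v₁).trans (by nlinarith [norm_nonneg v₁])
  have key2 : ∀ v₂ : Fin m → ℝ, ‖v₂‖ ≤ b⁻¹ * ‖Lp v₂‖ := by
    intro v₂
    have h := (Lp.symm : (Fin m → ℝ) →L[ℝ] (Fin m → ℝ)).le_opNorm (Lp v₂)
    have h2 : ‖Lp.symm (Lp v₂)‖ ≤ b⁻¹ * ‖Lp v₂‖ :=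
      h.trans (mul_le_mul_of_nonneg_right hLp (norm_nonneg _))
    simpa using h2
  have key3 : ∀ v₂ : Fin m → ℝ, b * ‖v₂‖ ≤ ‖Lp v₂‖ := by
    intro v₂
    have := mul_le_mul_of_nonneg_left (key2 v₂) hb.le
    calc b * ‖v₂‖ ≤ b * (b⁻¹ * ‖Lp v₂‖) := this
    _ = ‖Lp v₂‖ := by field_simp
  intro θ hθ
  refine ⟨a / b * θ, by positivity, ?_, ?_, ?_⟩
  · have h1 : a / b < 1 := (div_lt_one hb).2 hab
    nlinarith
  · intro v₁ v₂ hv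
    constructor
    · calc ‖v₂‖ ≤ b⁻¹ * ‖Lp v₂‖ := key2 v₂
      _ ≤ b⁻¹ * (θ * (a * ‖v₁‖)) := by
          apply mul_le_mul_of_nonneg_left _ (by positivity)
          exact hv.trans (mul_le_mul_of_nonneg_left (key1 v₁) hθ.le)
      _ = a / b * θ * ‖v₁‖ := by field_simp
    · rw [inv_mul_le_iff₀ ha]
      exact key1 v₁
  · intro v₁ v₂ hv
    refine ⟨?_, key3 v₂⟩
    calc ‖Lm v₁‖ ≤ a * ‖v₁‖ := key1 v₁
    _ ≤ a * (θ * ‖v₂‖) := mul_le_mul_of_nonneg_left hv ha.le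
    _ ≤ a * (θ * (b⁻¹ * ‖Lp v₂‖)) := by
        apply mul_le_mul_of_nonneg_left _ ha.le
        exact mul_le_mul_of_nonneg_left (key2 v₂) hθ.le
    _ = a / b * θ * ‖Lp v₂‖ := by field_simp
end
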